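/- arXiv:1904.06927 — 11 statements merged into one kernel-verified Lean document; each statement's English description precedes it below -/
import Mathlib

section
/- Let N1, N2 ≥ 1 be natural numbers, N = N1 + N2, n1 = N1/N, n2 = N2/N, and let α, β ∈ ℝ and ε > 0. Let a¹ ∈ ℝ^{N1} and a² ∈ ℝ^{N2} satisfy the splay conditions Σ_{j=1}^{N1} exp(2 i a¹_j) = 0 and Σ_{j=1}^{N2} exp(2 i a²_j) = 0. Let ΔΩ ∈ ℝ satisfy ΔΩ² − (n1 − 1/2) cos(α−β) ΔΩ + (ε/2)(2ε + sin(α−β)) = 0. Set ψ = arctan(ΔΩ/ε), ρ = (1 + (ΔΩ/ε)²)^{−1/2}, Ω1 = (1/2)(n1 cos(α−β) + ρ n2 cos(α−β+ψ)) and Ω2 = (1/2)(n2 cos(α−β) + ρ n1 cos(α−β−ψ)). Then Ω1 − Ω2 = ΔΩ, and the functions φ_{i,1}(t) = Ω1 t + a¹_i, φ_{i,2}(t) = Ω2 t + a²_i, κ_{ij,11}(t) = −sin(a¹_i − a¹_j + β), κ_{ij,22}(t) = −sin(a²_i − a²_j + β), κ_{ij,12}(t) = −ρ sin(ΔΩ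 t + a¹_i − a²_j + β − ψ), κ_{ij,21}(t) = −ρ sin(−ΔΩ t + a²_i − a¹_j + β + ψ) satisfy, for all t ∈ ℝ, the adaptive network equations dφ_{i,μ}/dt = −(1/N) Σ_{ν=1,2} Σ_{j=1}^{N_ν} κ_{ij,μν}(t) sin(φ_{i,μ}(t) − φ_{j,ν}(t) + α) and dκ_{ij,μν}/dt = −ε (sin(φ_{i,μ}(t) − φ_{j,ν}(t) + β) + κ_{ij,μν}(t)). -/
open Real

lemma sin_mul_sin' (A B : ℝ) :
    Real.sin A * Real.sin B = (Real.cos (A - B) - Real.cos (A + B)) / 2 := by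
  rw [Real.cos_sub, Real.cos_add]; ring

lemma prod_term2 (y u v : ℝ) :
    -(Real.sin (y + u) * Real.sin (y + v))
      = -(Real.cos (v - u)) / 2 + Real.cos ((v + u) + 2*y) / 2 := by
  rw [sin_mul_sin', show y + u - (y + v) = -(v - u) by ring, Real.cos_neg,
    show y + u + (y + v) = (v + u) + 2*y by ring]
  ring

lemma splay_cos_sum {n : ℕ} (a : Fin n → ℝ)
    (h : ∑ j, Complex.exp (2 * Complex.I * (a j : ℂ)) = 0) (C : ℝ) :
    ∑ j, Real.cos (C - 2 * a j) = 0 := by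
  have h' : ∑ j, (Complex.cos ((2 * a j : ℝ) : ℂ) + Complex.sin ((2 * a j : ℝ) : ℂ) * Complex.I) = 0 := by
    rw [← h]
    refine Finset.sum_congr rfl fun j _ => ?_
    rw [← Complex.exp_mul_I]
    congr 1
    push_cast
    ring
  have hre : ∑ j, Real.cos (2 * a j) = 0 := by
    have := congrArg Complex.re h'
    simp only [Complex.re_sum, Complex.add_re, Complex.mul_re, Complex.I_re, Complex.I_im,
      Complex.cos_ofReal_re, Complex.cos_ofReal_im, Complex.sin_ofReal_im, Complex.sin_ofReal_re,
      mul_zero, mul_one, zero_sub, add_neg_cancel_right, neg_zero, add_zero, Complex.zero_re] at this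
    simpa using this
  have him : ∑ j, Real.sin (2 * a j) = 0 := by
    have := congrArg Complex.im h'
    simp only [Complex.im_sum, Complex.add_im, Complex.mul_im, Complex.I_re, Complex.I_im,
      Complex.cos_ofReal_re, Complex.cos_ofReal_im, Complex.sin_ofReal_im, Complex.sin_ofReal_re,
      mul_zero, mul_one, zero_add, zero_mul, add_zero, Complex.zero_im] at this
    simpa using this
  calc ∑ j, Real.cos (C - 2 * a j)
      = ∑ j, (Real.cos C * Real.cos (2*a j) + Real.sin C * Real.sin (2 * a j)) :=
        Finset.sum_congr rfl fun j _ => by rw [Real.cos_sub]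
    _ = Real.cos C * ∑ j, Real.cos (2*a j) + Real.sin C * ∑ j, Real.sin (2*a j) := by
        rw [Finset.sum_add_distrib, Finset.mul_sum, Finset.mul_sum]
    _ = 0 := by rw [hre, him]; ring

/-- Two-cluster solution of splay type for the adaptively coupled phase-oscillator
network. -/
theorem two_cluster_splay_solution
    (N1 N2 : ℕ) (hN1 : 1 ≤ N1) (hN2 : 1 ≤ N2)
    (α β ε : ℝ) (hε : 0 < ε)
    (a1 : Fin N1 → ℝ) (a2 : Fin N2 → ℝ)
    (hsplay1 : ∑ j, Complex.exp (2 * Complex.I * (a1 j : ℂ)) = 0)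
    (hsplay2 : ∑ j, Complex.exp (2 * Complex.I * (a2 j : ℂ)) = 0)
    (N n1 n2 : ℝ) (hN : N = (N1 : ℝ) + (N2 : ℝ))
    (hn1 : n1 = (N1 : ℝ) / N) (hn2 : n2 = (N2 : ℝ) / N)
    (ΔΩ : ℝ)
    (hΔΩ : ΔΩ ^ 2 - (n1 - 1 / 2) * Real.cos (α - β) * ΔΩ
        + (ε / 2) * (2 * ε + Real.sin (α - β)) = 0)
    (ψ ρ Ω1 Ω2 : ℝ)
    (hψ : ψ = Real.arctan (ΔΩ / ε))
    (hρ : ρ = (1 + (ΔΩ / ε) ^ 2) ^ (-(1 : ℝ) / 2))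
    (hΩ1 : Ω1 = (1 / 2) * (n1 * Real.cos (α - β) + ρ * n2 * Real.cos (α - β + ψ)))
    (hΩ2 : Ω2 = (1 / 2) * (n2 * Real.cos (α - β) + ρ * n1 * Real.cos (α - β - ψ)))
    (φ1 : Fin N1 → ℝ → ℝ) (φ2 : Fin N2 → ℝ → ℝ)
    (κ11 : Fin N1 → Fin N1 → ℝ → ℝ) (κ22 : Fin N2 → Fin N2 → ℝ → ℝ)
    (κ12 : Fin N1 → Fin N2 → ℝ → ℝ) (κ21 : Fin N2 → Fin N1 → ℝ → ℝ)
    (hφ1 : ∀ i t, φ1 i t = Ω1 * t + a1 i)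
    (hφ2 : ∀ i t, φ2 i t = Ω2 * t + a2 i)
    (hκ11 : ∀ i j t, κ11 i j t = - Real.sin (a1 i - a1 j + β))
    (hκ22 : ∀ i j t, κ22 i j t = - Real.sin (a2 i - a2 j + β))
    (hκ12 : ∀ i j t, κ12 i j t = - ρ * Real.sin (ΔΩ * t + a1 i - a2 j + β - ψ))
    (hκ21 : ∀ i j t, κ21 i j t = - ρ * Real.sin (-ΔΩ * t + a2 i - a1 j + β + ψ)) :
    Ω1 - Ω2 = ΔΩ ∧
    (∀ i t, HasDerivAt (φ1 i)
      (-(1 / N) * ((∑ j, κ11 i j t * Real.sin (φ1 i t - φ1 j t + α))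
        + (∑ j, κ12 i j t * Real.sin (φ1 i t - φ2 j t + α)))) t) ∧
    (∀ i t, HasDerivAt (φ2 i)
      (-(1 / N) * ((∑ j, κ21 i j t * Real.sin (φ2 i t - φ1 j t + α))
        + (∑ j, κ22 i j t * Real.sin (φ2 i t - φ2 j t + α)))) t) ∧
    (∀ i j t, HasDerivAt (κ11 i j)
      (-ε * (Real.sin (φ1 i t - φ1 j t + β) + κ11 i j t)) t) ∧
    (∀ i j t, HasDerivAt (κ22 i j)
      (-ε * (Real.sin (φ2 i t - φ2 j t + β) + κ22 i j t)) t) ∧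
    (∀ i j t, HasDerivAt (κ12 i j)
      (-ε * (Real.sin (φ1 i t - φ2 j t + β) + κ12 i j t)) t) ∧
    (∀ i j t, HasDerivAt (κ21 i j)
      (-ε * (Real.sin (φ2 i t - φ1 j t + β) + κ21 i j t)) t) := by
  have hε' : ε ≠ 0 := hε.ne'
  have hNpos : (0:ℝ) < N := by
    rw [hN]
    have : (1:ℝ) ≤ (N1:ℝ) := by exact_mod_cast hN1
    have : (1:ℝ) ≤ (N2:ℝ) := by exact_mod_cast hN2
    positivity
  have hN0 : N ≠ 0 := hNpos.ne'
  have hn12 : n1 + n2 = 1 := by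
    rw [hn1, hn2]
    field_simp
    linarith [hN]
  -- trigonometric facts about ψ and ρ
  have hupos : (0:ℝ) < 1 + (ΔΩ/ε)^2 := by positivity
  have hsq : Real.sqrt (1 + (ΔΩ/ε)^2) ≠ 0 := by positivity
  have hρ' : ρ = (Real.sqrt (1 + (ΔΩ/ε)^2))⁻¹ := by
    rw [hρ, show (-(1:ℝ)/2) = -(1/2) by norm_num, Real.rpow_neg hupos.le, ← Real.sqrt_eq_rpow]
  have hcψ : Real.cos ψ = ρ := by
    rw [hψ, Real.cos_arctan, hρ', one_div]
  have hsψ : Real.sin ψ * ε = ρ * ΔΩ := by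
    rw [hψ, Real.sin_arctan, hρ']
    field_simp
  have hρsq : ρ^2 * (ε^2 + ΔΩ^2) = ε^2 := by
    rw [hρ', inv_pow, Real.sq_sqrt hupos.le]
    field_simp
  -- the frequency difference
  have hΩdiff : Ω1 - Ω2 = ΔΩ := by
    have key : (Ω1 - Ω2 - ΔΩ) * (2 * ε * (ε^2 + ΔΩ^2)) = 0 := by
      have hexp1 : Real.cos (α-β+ψ) = Real.cos (α-β)*ρ - Real.sin (α-β)*Real.sin ψ := by
        rw [Real.cos_add, hcψ]
      have hexp2 : Real.cos (α-β-ψ) = Real.cos (α-β)*ρ + Real.sin (α-β)*Real.sin ψ := by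
        rw [Real.cos_sub, hcψ]
      rw [hΩ1, hΩ2, hexp1, hexp2]
      linear_combination (-2*ε*ΔΩ) * hΔΩ
        + (-(ε*Real.cos (α-β)*(2*n1-1)) - Real.sin (α-β)*ΔΩ) * hρsq
        + (-(Real.sin (α-β)*ρ*(ε^2+ΔΩ^2))) * hsψ
        + ((-(Real.cos (α-β))*(1-ρ^2) - Real.sin (α-β)*ρ*Real.sin ψ)*ε*(ε^2+ΔΩ^2)) * hn12
    have hfac : (2 * ε * (ε^2 + ΔΩ^2)) ≠ 0 := by positivity
    have := mul_eq_zero.mp key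
    rcases this with h | h
    · linarith
    · exact absurd h hfac
  refine ⟨hΩdiff, ?_, ?_, ?_, ?_, ?_, ?_⟩
  · -- φ1 equation
    intro i t
    have e11 : (∑ j, κ11 i j t * Real.sin (φ1 i t - φ1 j t + α))
        = -((N1:ℝ) * Real.cos (α-β)) / 2 := by
      calc (∑ j, κ11 i j t * Real.sin (φ1 i t - φ1 j t + α))
          = ∑ j, (-(Real.cos (α-β))/2 + Real.cos ((2*a1 i + α + β) - 2*a1 j) / 2) := by
            refine Finset.sum_congr rfl fun j _ => ?_
            rw [hκ11, hφ1, hφ1,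
              show Ω1*t + a1 i - (Ω1*t + a1 j) + α = (a1 i - a1 j) + α by ring,
              show a1 i - a1 j + β = (a1 i - a1 j) + β by ring, neg_mul,
              prod_term2 (a1 i - a1 j) β α,
              show (α + β) + 2*(a1 i - a1 j) = (2*a1 i + α + β) - 2*a1 j by ring]
        _ = -((N1:ℝ) * Real.cos (α-β)) / 2 := by
            rw [Finset.sum_add_distrib, Finset.sum_const, Finset.card_univ, Fintype.card_fin,
              ← Finset.sum_div, splay_cos_sum a1 hsplay1 (2*a1 i + α + β), nsmul_eq_mul]
            ring
    have e12 : (∑ j, κ12 i j t * Real.sin (φ1 i t - φ2 j t + α))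
        = -((N2:ℝ) * ρ * Real.cos (α-β+ψ)) / 2 := by
      calc (∑ j, κ12 i j t * Real.sin (φ1 i t - φ2 j t + α))
          = ∑ j, (ρ * (-(Real.cos (α-β+ψ))/2
              + Real.cos ((2*ΔΩ*t + 2*a1 i + α + β - ψ) - 2*a2 j) / 2)) := by
            refine Finset.sum_congr rfl fun j _ => ?_
            rw [hκ12, hφ1, hφ2,
              show Ω1*t + a1 i - (Ω2*t + a2 j) + α = (ΔΩ*t + a1 i - a2 j) + α by
                rw [← hΩdiff]; ring,
              show ΔΩ*t + a1 i - a2 j + β - ψ = (ΔΩ*t + a1 i - a2 j) + (β - ψ) by ring,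
              show -ρ * Real.sin ((ΔΩ*t + a1 i - a2 j) + (β - ψ))
                  * Real.sin ((ΔΩ*t + a1 i - a2 j) + α)
                = ρ * (-(Real.sin ((ΔΩ*t + a1 i - a2 j) + (β - ψ))
                  * Real.sin ((ΔΩ*t + a1 i - a2 j) + α))) by ring,
              prod_term2 (ΔΩ*t + a1 i - a2 j) (β - ψ) α,
              show α - (β - ψ) = α - β + ψ by ring,
              show (α + (β - ψ)) + 2*(ΔΩ*t + a1 i - a2 j)
                = (2*ΔΩ*t + 2*a1 i + α + β - ψ) - 2*a2 j by ring]
        _ = -((N2:ℝ) * ρ * Real.cos (α-β+ψ)) / 2 := by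
            rw [← Finset.mul_sum, Finset.sum_add_distrib, Finset.sum_const, Finset.card_univ,
              Fintype.card_fin, ← Finset.sum_div,
              splay_cos_sum a2 hsplay2 (2*ΔΩ*t + 2*a1 i + α + β - ψ), nsmul_eq_mul]
            ring
    have hval : -(1 / N) * ((∑ j, κ11 i j t * Real.sin (φ1 i t - φ1 j t + α))
        + (∑ j, κ12 i j t * Real.sin (φ1 i t - φ2 j t + α))) = Ω1 := by
      rw [e11, e12, hΩ1, hn1, hn2, hN]
      field_simp
      ring
    rw [hval, show φ1 i = fun t => Ω1 * t + a1 i from funext (hφ1 i)]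
    simpa using ((hasDerivAt_id t).const_mul Ω1).add_const (a1 i)
  · -- φ2 equation
    intro i t
    have e21 : (∑ j, κ21 i j t * Real.sin (φ2 i t - φ1 j t + α))
        = -((N1:ℝ) * ρ * Real.cos (α-β-ψ)) / 2 := by
      calc (∑ j, κ21 i j t * Real.sin (φ2 i t - φ1 j t + α))
          = ∑ j, (ρ * (-(Real.cos (α-β-ψ))/2
              + Real.cos ((-(2*ΔΩ*t) + 2*a2 i + α + β + ψ) - 2*a1 j) / 2)) := by
            refine Finset.sum_congr rfl fun j _ => ?_
            rw [hκ21, hφ2, hφ1,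
              show Ω2*t + a2 i - (Ω1*t + a1 j) + α = (-ΔΩ*t + a2 i - a1 j) + α by
                rw [← hΩdiff]; ring,
              show -ΔΩ*t + a2 i - a1 j + β + ψ = (-ΔΩ*t + a2 i - a1 j) + (β + ψ) by ring,
              show -ρ * Real.sin ((-ΔΩ*t + a2 i - a1 j) + (β + ψ))
                  * Real.sin ((-ΔΩ*t + a2 i - a1 j) + α)
                = ρ * (-(Real.sin ((-ΔΩ*t + a2 i - a1 j) + (β + ψ))
                  * Real.sin ((-ΔΩ*t + a2 i - a1 j) + α))) by ring,
              prod_term2 (-ΔΩ*t + a2 i - a1 j) (β + ψ) α,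
              show α - (β + ψ) = α - β - ψ by ring,
              show (α + (β + ψ)) + 2*(-ΔΩ*t + a2 i - a1 j)
                = (-(2*ΔΩ*t) + 2*a2 i + α + β + ψ) - 2*a1 j by ring]
        _ = -((N1:ℝ) * ρ * Real.cos (α-β-ψ)) / 2 := by
            rw [← Finset.mul_sum, Finset.sum_add_distrib, Finset.sum_const, Finset.card_univ,
              Fintype.card_fin, ← Finset.sum_div,
              splay_cos_sum a1 hsplay1 (-(2*ΔΩ*t) + 2*a2 i + α + β + ψ), nsmul_eq_mul]
            ring
    have e22 : (∑ j, κ22 i j t * Real.sin (φ2 i t - φ2 j t + α))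
        = -((N2:ℝ) * Real.cos (α-β)) / 2 := by
      calc (∑ j, κ22 i j t * Real.sin (φ2 i t - φ2 j t + α))
          = ∑ j, (-(Real.cos (α-β))/2 + Real.cos ((2*a2 i + α + β) - 2*a2 j) / 2) := by
            refine Finset.sum_congr rfl fun j _ => ?_
            rw [hκ22, hφ2, hφ2,
              show Ω2*t + a2 i - (Ω2*t + a2 j) + α = (a2 i - a2 j) + α by ring,
              show a2 i - a2 j + β = (a2 i - a2 j) + β by ring, neg_mul,
              prod_term2 (a2 i - a2 j) β α,
              show (α + β) + 2*(a2 i - a2 j) = (2*a2 i + α + β) - 2*a2 j by ring]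
        _ = -((N2:ℝ) * Real.cos (α-β)) / 2 := by
            rw [Finset.sum_add_distrib, Finset.sum_const, Finset.card_univ, Fintype.card_fin,
              ← Finset.sum_div, splay_cos_sum a2 hsplay2 (2*a2 i + α + β), nsmul_eq_mul]
            ring
    have hval : -(1 / N) * ((∑ j, κ21 i j t * Real.sin (φ2 i t - φ1 j t + α))
        + (∑ j, κ22 i j t * Real.sin (φ2 i t - φ2 j t + α))) = Ω2 := by
      rw [e21, e22, hΩ2, hn1, hn2, hN]
      field_simp
      ring
    rw [hval, show φ2 i = fun t => Ω2 * t + a2 i from funext (hφ2 i)]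
    simpa using ((hasDerivAt_id t).const_mul Ω2).add_const (a2 i)
  · -- κ11 equation
    intro i j t
    have hval : -ε * (Real.sin (φ1 i t - φ1 j t + β) + κ11 i j t) = 0 := by
      rw [hκ11, hφ1, hφ1, show Ω1*t + a1 i - (Ω1*t + a1 j) + β = a1 i - a1 j + β by ring]
      ring
    rw [hval, show κ11 i j = fun _ => - Real.sin (a1 i - a1 j + β) from funext (hκ11 i j)]
    exact hasDerivAt_const t _
  · -- κ22 equation
    intro i j t
    have hval : -ε * (Real.sin (φ2 i t - φ2 j t + β) + κ22 i j t) = 0 := by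
      rw [hκ22, hφ2, hφ2, show Ω2*t + a2 i - (Ω2*t + a2 j) + β = a2 i - a2 j + β by ring]
      ring
    rw [hval, show κ22 i j = fun _ => - Real.sin (a2 i - a2 j + β) from funext (hκ22 i j)]
    exact hasDerivAt_const t _
  · -- κ12 equation
    intro i j t
    have hd : HasDerivAt (fun t => -ρ * Real.sin (ΔΩ * t + a1 i - a2 j + β - ψ))
        (-ρ * (Real.cos (ΔΩ * t + a1 i - a2 j + β - ψ) * ΔΩ)) t := by
      have h1 : HasDerivAt (fun t : ℝ => ΔΩ * t + a1 i - a2 j + β - ψ) ΔΩ t := by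
        simpa using (((((hasDerivAt_id t).const_mul ΔΩ).add_const (a1 i)).sub_const
          (a2 j)).add_const β).sub_const ψ
      exact h1.sin.const_mul (-ρ)
    have hval : -ε * (Real.sin (φ1 i t - φ2 j t + β) + κ12 i j t)
        = -ρ * (Real.cos (ΔΩ * t + a1 i - a2 j + β - ψ) * ΔΩ) := by
      rw [hκ12, hφ1, hφ2,
        show Ω1*t + a1 i - (Ω2*t + a2 j) + β = (ΔΩ*t + a1 i - a2 j + β - ψ) + ψ by
          rw [← hΩdiff]; ring,
        Real.sin_add, hcψ]
      linear_combination (-(Real.cos (ΔΩ*t + a1 i - a2 j + β - ψ))) * hsψ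
    rw [hval, show κ12 i j = fun t => -ρ * Real.sin (ΔΩ * t + a1 i - a2 j + β - ψ) from
      funext (hκ12 i j)]
    exact hd
  · -- κ21 equation
    intro i j t
    have hd : HasDerivAt (fun t => -ρ * Real.sin (-ΔΩ * t + a2 i - a1 j + β + ψ))
        (-ρ * (Real.cos (-ΔΩ * t + a2 i - a1 j + β + ψ) * -ΔΩ)) t := by
      have h1 : HasDerivAt (fun t : ℝ => -ΔΩ * t + a2 i - a1 j + β + ψ) (-ΔΩ) t := by
        simpa using (((((hasDerivAt_id t).const_mul (-ΔΩ)).add_const (a2 i)).sub_const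
          (a1 j)).add_const β).add_const ψ
      exact h1.sin.const_mul (-ρ)
    have hval : -ε * (Real.sin (φ2 i t - φ1 j t + β) + κ21 i j t)
        = -ρ * (Real.cos (-ΔΩ * t + a2 i - a1 j + β + ψ) * -ΔΩ) := by
      rw [hκ21, hφ2, hφ1,
        show Ω2*t + a2 i - (Ω1*t + a1 j) + β = (-ΔΩ*t + a2 i - a1 j + β + ψ) - ψ by
          rw [← hΩdiff]; ring,
        Real.sin_sub, hcψ]
      linear_combination (Real.cos (-ΔΩ*t + a2 i - a1 j + β + ψ)) * hsψ
    rw [hval, show κ21 i j = fun t => -ρ * Real.sin (-ΔΩ * t + a2 i - a1 j + β + ψ) from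
      funext (hκ21 i j)]
    exact hd
end

section
/- For every γ ∈ ℝ and every n1 ∈ [0,1], the critical time-scale separation ε_c(γ, n1) = −(1/4) sin γ + (1/2) √((1/4) sin²γ + (n1 − 1/2)² cos²γ) satisfies ε_c(γ, n1) ≤ 1/2, with equality if and only if sin γ = −1. -/
open Real

/-- The critical time-scale separation for two-cluster states of splay type is at most
`1/2`, with equality exactly when `sin γ = -1`. -/
theorem critical_eps_le_half
    (γ n1 : ℝ) (hn1 : n1 ∈ Set.Icc (0 : ℝ) 1) :
    -(1 / 4) * Real.sin γ
        + (1 / 2) * Real.sqrt ((1 / 4) * Real.sin γ ^ 2 + (n1 - 1 / 2) ^ 2 * Real.cos γ ^ 2)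
      ≤ 1 / 2 ∧
    (-(1 / 4) * Real.sin γ
        + (1 / 2) * Real.sqrt ((1 / 4) * Real.sin γ ^ 2 + (n1 - 1 / 2) ^ 2 * Real.cos γ ^ 2)
      = 1 / 2 ↔ Real.sin γ = -1) := by
  obtain ⟨h0, h1⟩ := hn1
  have hsin := Real.neg_one_le_sin γ
  have hcos2 : Real.cos γ ^ 2 = 1 - Real.sin γ ^ 2 := by
    have := Real.sin_sq_add_cos_sq γ; nlinarith
  have hq : (n1 - 1/2) ^ 2 ≤ 1/4 := by nlinarith
  have hinner : (1 / 4) * Real.sin γ ^ 2 + (n1 - 1 / 2) ^ 2 * Real.cos γ ^ 2 ≤ 1/4 := by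
    have hc : (0:ℝ) ≤ Real.cos γ ^ 2 := sq_nonneg _
    nlinarith [sq_nonneg (Real.sin γ)]
  have hsqrt : Real.sqrt ((1 / 4) * Real.sin γ ^ 2 + (n1 - 1 / 2) ^ 2 * Real.cos γ ^ 2) ≤ 1/2 := by
    have : Real.sqrt ((1 / 4) * Real.sin γ ^ 2 + (n1 - 1 / 2) ^ 2 * Real.cos γ ^ 2)
        ≤ Real.sqrt (1/4) := Real.sqrt_le_sqrt hinner
    have h14 : Real.sqrt (1/4) = 1/2 := by
      rw [show (1/4 : ℝ) = (1/2)^2 by norm_num, Real.sqrt_sq (by norm_num)]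
    linarith
  constructor
  · nlinarith
  · constructor
    · intro heq
      by_contra hne
      have : Real.sin γ > -1 := lt_of_le_of_ne hsin (Ne.symm hne)
      nlinarith
    · intro hs
      rw [hs]
      have : Real.cos γ ^ 2 = 0 := by rw [hcos2, hs]; ring
      rw [this]
      have : Real.sqrt ((1:ℝ)/4 * (-1:ℝ)^2 + (n1 - 1/2)^2 * 0) = 1/2 := by
        rw [show (1:ℝ)/4 * (-1:ℝ)^2 + (n1 - 1/2)^2 * 0 = (1/2)^2 by ring,
          Real.sqrt_sq (by norm_num)]
      rw [this]; ring
end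

section
/- Let N ≥ 1, α, β ∈ ℝ, ε > 0, and let a ∈ ℝ^N satisfy the splay condition Σ_{j=1}^N exp(2 i a_j) = 0. Set Ω = (1/2) cos(α − β). Then φ_i(t) = Ω t + a_i and the constant coupling weights κ_ij = −sin(a_i − a_j + β) satisfy, for all t ∈ ℝ and all i, j, the equations dφ_i/dt = −(1/N) Σ_{j=1}^N κ_ij sin(φ_i(t) − φ_j(t) + α) and dκ_ij/dt = −ε (sin(φ_i(t) − φ_j(t) + β) + κ_ij). -/
/-!
On the one-cluster ansatz the phase differences are constant, so the weights are stationary.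
By a product-to-sum formula each coupling term is `(cos (α - β) - cos (2 (a i - a j) + α + β)) / 2`,
and the second part sums to zero over `j` by the splay condition, leaving the frequency `Ω`.
-/

open Real Finset

theorem sum_cos_eq_zero_and_sum_sin_eq_zero_of_sum_exp_eq_zero {ι : Type*} (s : Finset ι)
    (θ : ι → ℝ) (h : ∑ j ∈ s, Complex.exp (θ j * Complex.I) = 0) :
    ∑ j ∈ s, cos (θ j) = 0 ∧ ∑ j ∈ s, sin (θ j) = 0 := by
  constructor
  · simpa only [Complex.re_sum, Complex.exp_ofReal_mul_I_re, Complex.zero_re] using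
      congrArg Complex.re h
  · simpa only [Complex.im_sum, Complex.exp_ofReal_mul_I_im, Complex.zero_im] using
      congrArg Complex.im h

theorem sum_cos_sub_eq_zero {ι : Type*} (s : Finset ι) (θ : ι → ℝ)
    (hcos : ∑ j ∈ s, cos (θ j) = 0) (hsin : ∑ j ∈ s, sin (θ j) = 0) (c : ℝ) :
    ∑ j ∈ s, cos (c - θ j) = 0 := by
  simp only [cos_sub, sum_add_distrib, ← mul_sum, hcos, hsin, mul_zero, add_zero]

theorem sin_add_mul_sin_add (x α β : ℝ) :
    sin (x + β) * sin (x + α) = (cos (α - β) - cos (2 * x + α + β)) / 2 := by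
  have hdiff := cos_sub (x + β) (x + α)
  have hsum := cos_add (x + β) (x + α)
  rw [show x + β - (x + α) = -(α - β) by ring, cos_neg] at hdiff
  rw [show x + β + (x + α) = 2 * x + α + β by ring] at hsum
  linarith

theorem sum_sin_add_mul_sin_add_of_splay {ι : Type*} (s : Finset ι) (a : ι → ℝ)
    (hsplay : ∑ j ∈ s, Complex.exp (2 * Complex.I * (a j : ℂ)) = 0) (α β x : ℝ) :
    ∑ j ∈ s, sin (x - a j + β) * sin (x - a j + α) = s.card * cos (α - β) / 2 := by
  obtain ⟨hcos, hsin⟩ := sum_cos_eq_zero_and_sum_sin_eq_zero_of_sum_exp_eq_zero s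
    (fun j => 2 * a j) (by simpa only [Complex.ofReal_mul, Complex.ofReal_ofNat, mul_comm,
      mul_left_comm] using hsplay)
  have hmean := sum_cos_sub_eq_zero s _ hcos hsin (2 * x + α + β)
  simp only [sin_add_mul_sin_add, ← sum_div, sum_sub_distrib, sum_const, nsmul_eq_mul]
  have hshift : ∀ j, 2 * (x - a j) + α + β = 2 * x + α + β - 2 * a j := fun j => by ring
  simp only [hshift, hmean, sub_zero]

theorem one_cluster_splay_solution_general
    (N : ℕ) (hN : 1 ≤ N) (α β ε : ℝ)
    (a : Fin N → ℝ)
    (hsplay : ∑ j, Complex.exp (2 * Complex.I * (a j : ℂ)) = 0)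
    (Ω : ℝ) (hΩ : Ω = (1 / 2) * Real.cos (α - β))
    (φ : Fin N → ℝ → ℝ) (κ : Fin N → Fin N → ℝ)
    (hφ : ∀ i t, φ i t = Ω * t + a i)
    (hκ : ∀ i j, κ i j = - Real.sin (a i - a j + β)) :
    (∀ i t, HasDerivAt (φ i)
      (-(1 / (N : ℝ)) * ∑ j, κ i j * Real.sin (φ i t - φ j t + α)) t) ∧
    (∀ i j t, HasDerivAt (fun _ : ℝ => κ i j)
      (-ε * (Real.sin (φ i t - φ j t + β) + κ i j)) t) := by
  have hdiff : ∀ i j t, φ i t - φ j t = a i - a j := fun i j t => by rw [hφ, hφ]; ring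
  refine ⟨fun i t => ?_, fun i j t => ?_⟩
  · have hmean := sum_sin_add_mul_sin_add_of_splay univ a hsplay α β (a i)
    rw [card_univ, Fintype.card_fin] at hmean
    have hfreq : -(1 / (N : ℝ)) * ∑ j, κ i j * sin (φ i t - φ j t + α) = Ω := by
      simp only [hκ, hdiff, neg_mul, sum_neg_distrib, hmean, hΩ]
      field_simp
    rw [hfreq, funext (hφ i)]
    simpa using ((hasDerivAt_id t).const_mul Ω).add_const (a i)
  · rw [hκ, hdiff, add_neg_cancel, mul_zero]
    exact hasDerivAt_const t _

/-- One-cluster states of splay type are solutions of the adaptive phase-oscillator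
network, with collective frequency `Ω = (1/2) cos(α − β)`. -/
theorem one_cluster_splay_solution
    (N : ℕ) (hN : 1 ≤ N) (α β ε : ℝ) (hε : 0 < ε)
    (a : Fin N → ℝ)
    (hsplay : ∑ j, Complex.exp (2 * Complex.I * (a j : ℂ)) = 0)
    (Ω : ℝ) (hΩ : Ω = (1 / 2) * Real.cos (α - β))
    (φ : Fin N → ℝ → ℝ) (κ : Fin N → Fin N → ℝ)
    (hφ : ∀ i t, φ i t = Ω * t + a i)
    (hκ : ∀ i j, κ i j = - Real.sin (a i - a j + β)) :
    (∀ i t, HasDerivAt (φ i)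
      (-(1 / (N : ℝ)) * ∑ j, κ i j * Real.sin (φ i t - φ j t + α)) t) ∧
    (∀ i j t, HasDerivAt (fun _ : ℝ => κ i j)
      (-ε * (Real.sin (φ i t - φ j t + β) + κ i j)) t) :=
  one_cluster_splay_solution_general N hN α β ε a hsplay Ω hΩ φ κ hφ hκ
end

section
/- Let N ≥ 1, α, β ∈ ℝ, ε > 0, and let a ∈ ℝ^N be of antipodal type, i.e. for all i, j there exists an integer m with a_i − a_j = m π. Set Ω = sin α · sin β. Then φ_i(t) = Ω t + a_i and the constant coupling weights κ_ij = −sin(a_i − a_j + β) satisfy, for all t ∈ ℝ and all i, j, the equations dφ_i/dt = −(1/N) Σ_{j=1}^N κ_ij sin(φ_i(t) − φ_j(t) + α) and dκ_ij/dt = −ε (sin(φ_i(t) − φ_j(t) + β) + κ_ij). -/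
open Real

/-!
Since all phase differences `a i - a j` lie in `πℤ`, shifting both arguments of
`sin (a i - a j + β) * sin (a i - a j + α)` by the same multiple `m π` multiplies both factors by
`(-1) ^ m`, so every product equals `sin β * sin α`. The coupling average is therefore the constant
`Ω = sin α * sin β`, and the weights sit exactly at the equilibrium `κ = -sin (· + β)`.
-/

theorem sin_add_int_mul_pi_mul_sin_add_int_mul_pi (x y : ℝ) (m : ℤ) :
    sin (x + m * π) * sin (y + m * π) = sin x * sin y := by
  have hsq : ((-1 : ℝ) ^ m) * (-1) ^ m = 1 := by
    rw [← mul_zpow, neg_one_mul, neg_neg, one_zpow]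
  rw [sin_add_int_mul_pi, sin_add_int_mul_pi]
  linear_combination sin x * sin y * hsq

theorem neg_sin_add_mul_sin_add_of_antipodal {d : ℝ} (hd : ∃ m : ℤ, d = m * π) (α β : ℝ) :
    -sin (d + β) * sin (d + α) = -(sin α * sin β) := by
  obtain ⟨m, rfl⟩ := hd
  rw [add_comm _ β, add_comm _ α, neg_mul, sin_add_int_mul_pi_mul_sin_add_int_mul_pi, mul_comm]

theorem neg_one_div_mul_sum_const_neg {N : ℕ} (hN : N ≠ 0) (c : ℝ) :
    -(1 / (N : ℝ)) * ∑ _j : Fin N, -c = c := by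
  rw [Finset.sum_const, Finset.card_univ, Fintype.card_fin, nsmul_eq_mul]
  field_simp

theorem one_cluster_antipodal_solution_general
    (N : ℕ) (hN : 1 ≤ N) (α β ε : ℝ)
    (a : Fin N → ℝ)
    (hanti : ∀ i j, ∃ m : ℤ, a i - a j = m * Real.pi)
    (Ω : ℝ) (hΩ : Ω = Real.sin α * Real.sin β)
    (φ : Fin N → ℝ → ℝ) (κ : Fin N → Fin N → ℝ)
    (hφ : ∀ i t, φ i t = Ω * t + a i)
    (hκ : ∀ i j, κ i j = - Real.sin (a i - a j + β)) :
    (∀ i t, HasDerivAt (φ i)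
      (-(1 / (N : ℝ)) * ∑ j, κ i j * Real.sin (φ i t - φ j t + α)) t) ∧
    (∀ i j t, HasDerivAt (fun _ : ℝ => κ i j)
      (-ε * (Real.sin (φ i t - φ j t + β) + κ i j)) t) := by
  have hdiff : ∀ i j t, φ i t - φ j t = a i - a j := fun i j t => by
    rw [hφ, hφ]; ring
  refine ⟨fun i t => ?_, fun i j t => ?_⟩
  · have hmean : -(1 / (N : ℝ)) * ∑ j, κ i j * sin (φ i t - φ j t + α) = Ω := by
      simp only [hκ, hdiff, neg_sin_add_mul_sin_add_of_antipodal (hanti i _)]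
      rw [neg_one_div_mul_sum_const_neg (by omega), hΩ]
    rw [hmean, show φ i = fun t => Ω * t + a i from funext (hφ i)]
    simpa using ((hasDerivAt_id t).const_mul Ω).add_const (a i)
  · have hequilibrium : sin (φ i t - φ j t + β) + κ i j = 0 := by
      rw [hκ, hdiff, add_neg_cancel]
    rw [hequilibrium, mul_zero]
    exact hasDerivAt_const t (κ i j)

/-- One-cluster states of antipodal type are solutions of the adaptive phase-oscillator
network, with collective frequency `Ω = sin α · sin β`. -/
theorem one_cluster_antipodal_solution
    (N : ℕ) (hN : 1 ≤ N) (α β ε : ℝ) (hε : 0 < ε)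
    (a : Fin N → ℝ)
    (hanti : ∀ i j, ∃ m : ℤ, a i - a j = m * Real.pi)
    (Ω : ℝ) (hΩ : Ω = Real.sin α * Real.sin β)
    (φ : Fin N → ℝ → ℝ) (κ : Fin N → Fin N → ℝ)
    (hφ : ∀ i t, φ i t = Ω * t + a i)
    (hκ : ∀ i j, κ i j = - Real.sin (a i - a j + β)) :
    (∀ i t, HasDerivAt (φ i)
      (-(1 / (N : ℝ)) * ∑ j, κ i j * Real.sin (φ i t - φ j t + α)) t) ∧
    (∀ i j t, HasDerivAt (fun _ : ℝ => κ i j)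
      (-ε * (Real.sin (φ i t - φ j t + β) + κ i j)) t) :=
  one_cluster_antipodal_solution_general N hN α β ε a hanti Ω hΩ φ κ hφ hκ
end

section
/- Let p, q ≥ 1, let c : ZMod p → ℂ and d : ZMod q → ℂ, let m1, m2 ∈ ℂ with m1 ≠ 0, and let M be the (p+q) × (p+q) complex block matrix M = [[A, m1·𝟙_{p,q}], [m2·𝟙_{q,p}, B]], where A_{ij} = c(j − i), B_{ij} = d(j − i), and 𝟙 denotes the all-ones matrix. Set μ0 = Σ_{l=0}^{p−1} c(l) and ν0 = Σ_{m=0}^{q−1} d(m). If a ∈ ℂ satisfies a² + ((μ0 − ν0)/(m1 q)) a − (m2 p)/(m1 q) = 0, then the vector z ∈ ℂ^{p+q} whose first p entries equal 1 and whose last q entries equal a satisfies M z = (μ0 + m1 q a) z. -/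
open Real Matrix

lemma sum_fin_zmod {n : ℕ} [NeZero n] (hn : 1 ≤ n) (f : ZMod n → ℂ) :
    ∑ j : Fin n, f ((j : ℕ) : ZMod n) = ∑ x : ZMod n, f x := by
  apply Fintype.sum_bijective (fun j : Fin n => ((j : ℕ) : ZMod n))
  · rw [Fintype.bijective_iff_injective_and_card]
    refine ⟨fun j k h => ?_, by simp [ZMod.card]⟩
    have := congrArg ZMod.val h
    rwa [ZMod.val_natCast, ZMod.val_natCast, Nat.mod_eq_of_lt j.2,
      Nat.mod_eq_of_lt k.2, ← Fin.ext_iff] at this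
  · intro; rfl

lemma circ_row_sum {n : ℕ} [NeZero n] (hn : 1 ≤ n) (f : ZMod n → ℂ) (i : Fin n) :
    ∑ j : Fin n, f (((j : ℕ) : ZMod n) - ((i : ℕ) : ZMod n)) = ∑ l : Fin n, f ((l : ℕ) : ZMod n) := by
  rw [sum_fin_zmod hn, sum_fin_zmod hn fun x => f (x - _)]
  exact Fintype.sum_equiv (Equiv.subRight (((i : ℕ) : ZMod n))) _ _ fun x => rfl

/-- Eigenvectors of a block matrix with circulant diagonal blocks and constant
off-diagonal blocks which are constant on each block: if `a` solves the quadratic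
`a² + ((μ0 − ν0)/(m1 q)) a − (m2 p)/(m1 q) = 0`, then the vector which is `1` on the
first block and `a` on the second block is an eigenvector with eigenvalue `μ0 + m1 q a`. -/
theorem block_circulant_constant_eigenvectors
    (p q : ℕ) (hp : 1 ≤ p) (hq : 1 ≤ q)
    (c : ZMod p → ℂ) (d : ZMod q → ℂ) (m1 m2 : ℂ) (hm1 : m1 ≠ 0)
    (A : Matrix (Fin p) (Fin p) ℂ)
    (hA : ∀ i j, A i j = c (((j : ℕ) : ZMod p) - ((i : ℕ) : ZMod p)))
    (B : Matrix (Fin q) (Fin q) ℂ)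
    (hB : ∀ i j, B i j = d (((j : ℕ) : ZMod q) - ((i : ℕ) : ZMod q)))
    (M : Matrix (Fin p ⊕ Fin q) (Fin p ⊕ Fin q) ℂ)
    (hM : M = Matrix.fromBlocks A (Matrix.of fun _ _ => m1) (Matrix.of fun _ _ => m2) B)
    (μ0 ν0 : ℂ)
    (hμ0 : μ0 = ∑ l : Fin p, c ((l : ℕ) : ZMod p))
    (hν0 : ν0 = ∑ m : Fin q, d ((m : ℕ) : ZMod q))
    (a : ℂ)
    (ha : a ^ 2 + ((μ0 - ν0) / (m1 * q)) * a - (m2 * p) / (m1 * q) = 0) :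
    M.mulVec (Sum.elim (fun _ : Fin p => (1 : ℂ)) (fun _ : Fin q => a))
      = (μ0 + m1 * q * a) •
        Sum.elim (fun _ : Fin p => (1 : ℂ)) (fun _ : Fin q => a) := by
  have hq0 : (q : ℂ) ≠ 0 := Nat.cast_ne_zero.2 (by omega)
  have hmq : m1 * q ≠ 0 := mul_ne_zero hm1 hq0
  have key : m2 * p + ν0 * a = (μ0 + m1 * q * a) * a := by
    have := congrArg (fun z => z * (m1 * q)) ha
    field_simp at this
    linear_combination -this
  haveI : NeZero p := ⟨by omega⟩
  haveI : NeZero q := ⟨by omega⟩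
  funext x
  cases x with
  | inl i =>
    simp only [hM, mulVec, dotProduct, Fintype.sum_sum_type, fromBlocks_apply₁₁,
      fromBlocks_apply₁₂, Sum.elim_inl, Sum.elim_inr, Pi.smul_apply, smul_eq_mul, of_apply]
    simp only [hA, mul_one]
    rw [circ_row_sum hp c i, ← hμ0]
    simp [mul_comm]
    ring
  | inr i =>
    simp only [hM, mulVec, dotProduct, Fintype.sum_sum_type, fromBlocks_apply₂₁,
      fromBlocks_apply₂₂, Sum.elim_inl, Sum.elim_inr, Pi.smul_apply, smul_eq_mul, of_apply]
    simp only [hB, mul_one]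
    rw [Finset.sum_const, ← Finset.sum_mul, circ_row_sum hq d i, ← hν0]
    simpa [mul_comm] using key
end

section
/- Let N ≥ 1, α, β ∈ ℝ, ε > 0, and let a ∈ ℝ^N be arbitrary. Then the characteristic polynomial of the linearization matrix J(a) is divisible by (X + ε)^{N² − N}; in particular, −ε is an eigenvalue of J(a) of algebraic multiplicity at least N² − N. -/
open Real Matrix Polynomial

/-- The phase block of the linearization of the adaptive phase-oscillator network at a
one-cluster state with phase lags `a`. -/
noncomputable def linA (N : ℕ) (α β : ℝ) (a : Fin N → ℝ) : Matrix (Fin N) (Fin N) ℝ :=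
  Matrix.of fun i j =>
    if i = j then
      -(1 / 2) * Real.sin (α - β) - (1 / (N : ℝ)) * Real.sin β * Real.cos α
        + (1 / (2 * (N : ℝ))) * ∑ k, Real.sin (2 * (a i - a k) + α + β)
    else (1 / (2 * (N : ℝ))) * (Real.sin (α - β) - Real.sin (2 * (a i - a j) + α + β))

/-- The phase-to-coupling block of the linearization. -/
noncomputable def linB (N : ℕ) (α : ℝ) (a : Fin N → ℝ) :
    Matrix (Fin N) (Fin N × Fin N) ℝ :=
  Matrix.of fun k p =>
    if k = p.1 then -(1 / (N : ℝ)) * Real.sin (a p.1 - a p.2 + α) else 0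

/-- The coupling-to-phase block of the linearization. -/
noncomputable def linC (N : ℕ) (β ε : ℝ) (a : Fin N → ℝ) :
    Matrix (Fin N × Fin N) (Fin N) ℝ :=
  Matrix.of fun p l =>
    if p.1 = p.2 then 0
    else if l = p.1 then -ε * Real.cos (a p.1 - a p.2 + β)
    else if l = p.2 then ε * Real.cos (a p.1 - a p.2 + β)
    else 0

/-- The linearization matrix `J(a)` of the adaptive phase-oscillator network at a
one-cluster state with phase lags `a`. -/
noncomputable def linJ (N : ℕ) (α β ε : ℝ) (a : Fin N → ℝ) :
    Matrix (Fin N ⊕ Fin N × Fin N) (Fin N ⊕ Fin N × Fin N) ℝ :=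
  Matrix.fromBlocks (linA N α β a) (linB N α a) (linC N β ε a)
    (-(ε • (1 : Matrix (Fin N × Fin N) (Fin N × Fin N) ℝ)))

/-- Block-triangularization lemma: for a block matrix with lower-right block `-ε • 1`,
the characteristic polynomial is `(X + C ε) ^ (|m| - |n|)` times a polynomial. -/
lemma charpoly_fromBlocks_neg_smul_one_factor
    {n m : Type*} [Fintype n] [Fintype m] [DecidableEq n] [DecidableEq m]
    (A : Matrix n n ℝ) (B : Matrix n m ℝ) (Cm : Matrix m n ℝ) (ε : ℝ)
    (hle : Fintype.card n ≤ Fintype.card m) :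
    ∃ p : ℝ[X], (Matrix.fromBlocks A B Cm (-(ε • (1 : Matrix m m ℝ)))).charpoly
      = (X + C ε) ^ (Fintype.card m - Fintype.card n) * p := by
  classical
  set q : ℝ[X] := X + Polynomial.C ε with hq
  have hD : charmatrix (-(ε • (1 : Matrix m m ℝ))) = q • (1 : Matrix m m ℝ[X]) := by
    ext i j
    by_cases h : i = j
    · subst h
      simp [charmatrix_apply, Matrix.one_apply, hq, Matrix.diagonal_apply]
    · simp [charmatrix_apply, Matrix.one_apply, h, Matrix.diagonal_apply]
  set M : Matrix (n ⊕ m) (n ⊕ m) ℝ[X] :=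
    Matrix.fromBlocks (charmatrix A) (-(B.map Polynomial.C)) (-(Cm.map Polynomial.C))
      (q • (1 : Matrix m m ℝ[X])) with hM
  have hcm : charmatrix (Matrix.fromBlocks A B Cm (-(ε • (1 : Matrix m m ℝ)))) = M := by
    rw [charmatrix_fromBlocks, hD]
  set T : Matrix (n ⊕ m) (n ⊕ m) ℝ[X] :=
    Matrix.fromBlocks (q • (1 : Matrix n n ℝ[X])) 0 (Cm.map Polynomial.C)
      (1 : Matrix m m ℝ[X]) with hT
  have hMT : M * T = Matrix.fromBlocks
      (q • charmatrix A + -(B.map Polynomial.C) * Cm.map Polynomial.C) (-(B.map Polynomial.C))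
      0 (q • (1 : Matrix m m ℝ[X])) := by
    rw [hM, hT, Matrix.fromBlocks_multiply]
    simp only [Matrix.mul_smul, Matrix.smul_mul, Matrix.mul_one, Matrix.one_mul,
      Matrix.mul_zero, Matrix.neg_mul, zero_add, add_zero, smul_neg, neg_add_cancel]
  have hdetT : T.det = q ^ Fintype.card n := by
    rw [hT, Matrix.det_fromBlocks_zero₁₂, Matrix.det_one, mul_one, Matrix.det_smul,
      Matrix.det_one, mul_one]
  have hdetMT : (M * T).det =
      (q • charmatrix A + -(B.map Polynomial.C) * Cm.map Polynomial.C).det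
        * q ^ Fintype.card m := by
    rw [hMT, Matrix.det_fromBlocks_zero₂₁, Matrix.det_smul, Matrix.det_one, mul_one]
  have hqne : q ≠ 0 := (Polynomial.monic_X_add_C ε).ne_zero
  refine ⟨(q • charmatrix A + -(B.map Polynomial.C) * Cm.map Polynomial.C).det, ?_⟩
  have hpow : q ^ Fintype.card m
      = q ^ (Fintype.card m - Fintype.card n) * q ^ Fintype.card n := by
    rw [← pow_add, Nat.sub_add_cancel hle]
  have key : M.det * q ^ Fintype.card n =
      (q ^ (Fintype.card m - Fintype.card n)
        * (q • charmatrix A + -(B.map Polynomial.C) * Cm.map Polynomial.C).det)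
        * q ^ Fintype.card n := by
    rw [← hdetT, ← Matrix.det_mul, hdetMT, hdetT, hpow]
    ring
  have := mul_right_cancel₀ (pow_ne_zero _ hqne) key
  rw [Matrix.charpoly, hcm, this, mul_comm]

theorem neg_eps_eigenvalue_of_linearization
    (N : ℕ) (hN : 1 ≤ N) (α β ε : ℝ) (hε : 0 < ε) (a : Fin N → ℝ) :
    (X + C ε) ^ (N ^ 2 - N) ∣ (linJ N α β ε a).charpoly ∧
    N ^ 2 - N ≤ Polynomial.rootMultiplicity (-ε) (linJ N α β ε a).charpoly := by
  have hcard : Fintype.card (Fin N × Fin N) - Fintype.card (Fin N) = N ^ 2 - N := by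
    simp [Fintype.card_prod, sq]
  have hle : Fintype.card (Fin N) ≤ Fintype.card (Fin N × Fin N) := by
    simp [Fintype.card_prod]
    exact Nat.le_mul_of_pos_left N hN
  obtain ⟨p, hp⟩ := charpoly_fromBlocks_neg_smul_one_factor
    (linA N α β a) (linB N α a) (linC N β ε a) ε hle
  rw [hcard] at hp
  have hdvd : (X + C ε) ^ (N ^ 2 - N) ∣ (linJ N α β ε a).charpoly := ⟨p, by rw [linJ, hp]⟩
  refine ⟨hdvd, ?_⟩
  rw [Polynomial.le_rootMultiplicity_iff (Matrix.charpoly_monic _).ne_zero]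
  simpa [sub_neg_eq_add] using hdvd
end

section
/- Let N ≥ 2, α, β ∈ ℝ, ε > 0, and let a ∈ ℝ^N be such that every a_i is an integer multiple of π (an antipodal state, including in-phase synchrony). Then the characteristic polynomial of the linearization matrix J(a) equals X · (X + ε)^{N(N−1)+1} · (X² + (ε − cos α sin β) X − ε sin(α+β))^{N−1}. -/
/-!
At an antipodal state every phase difference `t = a i - a j` has `sin t = 0` and `cos t ^ 2 = 1`,
so the lags drop out: `A = cos α sin β • P` and `B * C = ε sin α cos β • P`, where
`P = 1 - (1 / N) • 𝟙𝟙ᵀ` is the centering projection. Eliminating the scalar block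
`(X + ε) • 1` of the characteristic matrix by an inverse-free Schur complement gives
`det (X - J) * (X + ε) ^ N = (X + ε) ^ (N * N) * det ((X + ε) • (X - A) - B * C)`, and the last
matrix is a scalar plus a multiple of `𝟙𝟙ᵀ`, with eigenvalue `(X + ε) * X` on `𝟙` and the quadratic
factor on its orthogonal complement.
-/

open Real Matrix Polynomial

namespace Real

theorem sin_add_of_sin_eq_zero {t : ℝ} (ht : sin t = 0) (x : ℝ) :
    sin (t + x) = cos t * sin x := by
  rw [sin_add, ht, zero_mul, zero_add, mul_comm]

theorem cos_add_of_sin_eq_zero {t : ℝ} (ht : sin t = 0) (x : ℝ) :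
    cos (t + x) = cos t * cos x := by
  rw [cos_add, ht, zero_mul, sub_zero]

theorem sin_add_mul_cos_add_of_sin_eq_zero {t : ℝ} (ht : sin t = 0) (x y : ℝ) :
    sin (t + x) * cos (t + y) = sin x * cos y := by
  have hcos : cos t ^ 2 = 1 := by linear_combination sin_sq_add_cos_sq t - sin t * ht
  rw [sin_add_of_sin_eq_zero ht, cos_add_of_sin_eq_zero ht]
  linear_combination sin x * cos y * hcos

theorem sin_two_mul_add_of_sin_eq_zero {t : ℝ} (ht : sin t = 0) (x : ℝ) :
    sin (2 * t + x) = sin x := by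
  rw [sin_add_of_sin_eq_zero (by rw [sin_two_mul, ht, mul_zero, zero_mul]), cos_two_mul']
  linear_combination sin x * sin_sq_add_cos_sq t - 2 * sin t * sin x * ht

end Real

namespace Matrix

variable {R : Type*} [CommRing R] {m n : Type*} [Fintype m] [Fintype n] [DecidableEq m]
  [DecidableEq n]

/-- Schur complement of a scalar block `d • 1` without inverting `d`: multiply on the right by
`fromBlocks (d • 1) 0 (-C) 1`. -/
theorem det_fromBlocks_smul_one_mul_pow (A : Matrix m m R) (B : Matrix m n R)
    (C : Matrix n m R) (d : R) :
    (fromBlocks A B C (d • 1)).det * d ^ Fintype.card m =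
      d ^ Fintype.card n * (d • A - B * C).det := by
  have hmul : fromBlocks A B C (d • 1) * fromBlocks (d • 1) 0 (-C) 1 =
      fromBlocks (d • A - B * C) B 0 (d • 1) := by
    simp [fromBlocks_multiply, sub_eq_add_neg]
  have := congrArg det hmul
  rw [det_mul, det_fromBlocks_zero₁₂, det_fromBlocks_zero₂₁, det_smul, det_one, det_one,
    det_smul, det_one] at this
  simpa [mul_comm] using this

theorem det_smul_one_add_smul_ones [Nonempty n] (g h : R) :
    (g • (1 : Matrix n n R) + h • of fun _ _ => 1).det =
      g ^ (Fintype.card n - 1) * (g + Fintype.card n * h) := by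
  have hvec : g • (1 : Matrix n n R) + h • of (fun _ _ => 1) =
      scalar n g - vecMulVec (-h • fun _ => 1) fun _ => 1 := by
    ext i j
    simp [vecMulVec_apply, smul_eq_mul_diagonal, sub_eq_add_neg]
  rw [hvec, ← eval_charpoly, charpoly_vecMulVec]
  obtain ⟨k, hk⟩ := Nat.exists_eq_add_one.mpr (Fintype.card_pos (α := n))
  simp only [hk, pow_succ, dotProduct, Pi.smul_apply, smul_eq_mul, mul_one, Finset.sum_neg_distrib,
    Finset.sum_const, Finset.card_univ, nsmul_eq_mul, Nat.cast_add, Nat.cast_one,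
    add_tsub_cancel_right, neg_smul, sub_neg_eq_add, eval_add, eval_mul, eval_pow, eval_X,
    eval_smul]
  ring

theorem charmatrix_neg_smul_one (r : R) :
    charmatrix (-(r • 1) : Matrix n n R) = (X + C r) • 1 := by
  ext i j
  by_cases hij : i = j
  · subst hij; simp
  · simp [hij]

end Matrix

section Antipodal

variable {N : ℕ} {a : Fin N → ℝ}

theorem sin_sub_eq_zero_of_forall_sin_eq_zero (ha : ∀ i, sin (a i) = 0) (i j : Fin N) :
    sin (a i - a j) = 0 := by
  rw [sin_sub, ha i, ha j, zero_mul, mul_zero, sub_zero]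

theorem linA_of_forall_sin_eq_zero (α β : ℝ) (ha : ∀ i, sin (a i) = 0) :
    linA N α β a = (cos α * sin β) • (1 - (N : ℝ)⁻¹ • of fun _ _ => 1) := by
  ext i j
  have hN : (N : ℝ) ≠ 0 := Nat.cast_ne_zero.mpr i.pos.ne'
  have hsin (k : Fin N) : sin (2 * (a i - a k) + α + β) = sin (α + β) := by
    rw [add_assoc, sin_two_mul_add_of_sin_eq_zero (sin_sub_eq_zero_of_forall_sin_eq_zero ha i k)]
  by_cases hij : i = j
  · subst hij
    simp only [linA, of_apply, if_true, hsin, Finset.sum_const, Finset.card_univ,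
      Fintype.card_fin, nsmul_eq_mul, Matrix.smul_apply, Matrix.sub_apply, one_apply_eq,
      smul_eq_mul]
    rw [sin_add, sin_sub]
    field_simp
    ring
  · simp only [linA, of_apply, if_neg hij, hsin, Matrix.smul_apply, Matrix.sub_apply,
      one_apply_ne hij, smul_eq_mul]
    rw [sin_add, sin_sub]
    field_simp
    ring

-- On the diagonal `p.1 = p.2` the bracket vanishes, so this form needs no case split.
theorem linC_apply_eq (β ε : ℝ) (p : Fin N × Fin N) (l : Fin N) :
    linC N β ε a p l =
      ε * cos (a p.1 - a p.2 + β) * ((if l = p.2 then 1 else 0) - if l = p.1 then 1 else 0) := by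
  obtain ⟨i, j⟩ := p
  by_cases hij : i = j
  · subst hij; simp [linC]
  · by_cases hli : l = i
    · subst hli; simp [linC, hij]
    · by_cases hlj : l = j <;> simp [linC, hij, Ne.symm hij, hli, hlj]

theorem linB_mul_linC_of_forall_sin_eq_zero (α β ε : ℝ) (ha : ∀ i, sin (a i) = 0) :
    linB N α a * linC N β ε a =
      (ε * sin α * cos β) • (1 - (N : ℝ)⁻¹ • of fun _ _ => 1) := by
  ext k l
  have hN : (N : ℝ) ≠ 0 := Nat.cast_ne_zero.mpr k.pos.ne'
  have hterm (j : Fin N) : linB N α a k (k, j) * linC N β ε a (k, j) l =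
      -(N : ℝ)⁻¹ * (ε * sin α * cos β) * ((if l = j then 1 else 0) - if l = k then 1 else 0) := by
    rw [linC_apply_eq]
    simp only [linB, of_apply, if_true]
    linear_combination (-(N : ℝ)⁻¹ * ε * ((if l = j then 1 else 0) - if l = k then 1 else 0)) *
      sin_add_mul_cos_add_of_sin_eq_zero (sin_sub_eq_zero_of_forall_sin_eq_zero ha k j) α β
  rw [mul_apply, Fintype.sum_prod_type, Finset.sum_eq_single k,
    Finset.sum_congr rfl fun j _ => hterm j]
  · rw [← Finset.mul_sum, Finset.sum_sub_distrib]
    by_cases hkl : k = l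
    · subst hkl
      simp only [Finset.sum_ite_eq, Finset.mem_univ, ↓reduceIte, Finset.sum_const,
        Finset.card_univ, Fintype.card_fin, nsmul_eq_mul, mul_one, smul_of, Matrix.smul_apply,
        Matrix.sub_apply, one_apply_eq, of_apply, Pi.smul_apply, smul_eq_mul]
      field_simp
      ring
    · simp only [Finset.sum_ite_eq, Finset.mem_univ, ↓reduceIte, Ne.symm hkl,
        Finset.sum_const_zero, sub_zero, mul_one, smul_of, Matrix.smul_apply, Matrix.sub_apply,
        ne_eq, hkl, not_false_eq_true, one_apply_ne, of_apply, Pi.smul_apply, smul_eq_mul]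
      ring
  · intro i _ hik
    simp [linB, Ne.symm hik]
  · simp

theorem schur_linJ_of_forall_sin_eq_zero (α β ε : ℝ) (ha : ∀ i, sin (a i) = 0) :
    (X + C ε) • charmatrix (linA N α β a) - (linB N α a).map C * (linC N β ε a).map C =
      (X ^ 2 + C (ε - cos α * sin β) * X - C (ε * sin (α + β))) • 1 +
        (C (N : ℝ)⁻¹ * ((X + C ε) * C (cos α * sin β) + C (ε * sin α * cos β))) •
          of fun _ _ => 1 := by
  rw [← Matrix.map_mul, linA_of_forall_sin_eq_zero α β ha,
    linB_mul_linC_of_forall_sin_eq_zero α β ε ha, sin_add]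
  ext i j : 1
  by_cases hij : i = j
  · subst hij
    simp only [smul_of, Matrix.sub_apply, Matrix.smul_apply, charmatrix_apply_eq, one_apply_eq,
      of_apply, Pi.smul_apply, smul_eq_mul, mul_one, map_mul, map_sub, map_one, map_apply, map_add,
      Matrix.add_apply]
    ring
  · simp only [smul_of, Matrix.sub_apply, Matrix.smul_apply, ne_eq, hij, not_false_eq_true,
      charmatrix_apply_ne, one_apply_ne, of_apply, Pi.smul_apply, smul_eq_mul, mul_one, zero_sub,
      mul_neg, map_neg, map_mul, neg_neg, map_apply, sub_neg_eq_add, map_sub, map_add,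
      Matrix.add_apply, mul_zero, zero_add]
    ring

theorem det_schur_linJ_of_forall_sin_eq_zero [NeZero N] (α β ε : ℝ)
    (ha : ∀ i, sin (a i) = 0) :
    ((X + C ε) • charmatrix (linA N α β a) - (linB N α a).map C * (linC N β ε a).map C).det =
      (X ^ 2 + C (ε - cos α * sin β) * X - C (ε * sin (α + β))) ^ (N - 1) * ((X + C ε) * X) := by
  rw [schur_linJ_of_forall_sin_eq_zero α β ε ha, det_smul_one_add_smul_ones, Fintype.card_fin]
  have hN : (N : ℝ[X]) * C (N : ℝ)⁻¹ = 1 := by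
    rw [← C_eq_natCast, ← C_mul, mul_inv_cancel₀ (NeZero.ne _), C_1]
  congr 1
  rw [sin_add]
  simp only [map_add, map_sub, map_mul]
  linear_combination ((X + C ε) * C (cos α) * C (sin β) + C ε * C (sin α) * C (cos β)) * hN

end Antipodal

theorem charpoly_antipodal_general
    (N : ℕ) (hN : 2 ≤ N) (α β ε : ℝ) (a : Fin N → ℝ)
    (ha : ∀ i, ∃ m : ℤ, a i = m * Real.pi) :
    (linJ N α β ε a).charpoly =
      X * (X + C ε) ^ (N * (N - 1) + 1) *
        (X ^ 2 + C (ε - Real.cos α * Real.sin β) * X - C (ε * Real.sin (α + β))) ^ (N - 1) := by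
  obtain ⟨n, rfl⟩ : ∃ n, N = n + 1 := ⟨N - 1, by omega⟩
  have hsin (i : Fin (n + 1)) : sin (a i) = 0 := by
    obtain ⟨m, hm⟩ := ha i
    rw [hm, sin_int_mul_pi]
  have hschur := det_fromBlocks_smul_one_mul_pow (charmatrix (linA (n + 1) α β a))
    (-(linB (n + 1) α a).map C) (-(linC (n + 1) β ε a).map C) (X + C ε)
  rw [← charmatrix_neg_smul_one, ← charmatrix_fromBlocks, Matrix.neg_mul, Matrix.mul_neg, neg_neg,
    det_schur_linJ_of_forall_sin_eq_zero α β ε hsin, Fintype.card_prod, Fintype.card_fin] at hschur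
  apply mul_right_cancel₀ (pow_ne_zero (n + 1) (X_add_C_ne_zero ε))
  rw [charpoly, linJ, hschur, Nat.add_sub_cancel]
  ring

/-- The characteristic polynomial of the linearization at an antipodal one-cluster
state (all phases integer multiples of `π`). -/
theorem charpoly_antipodal
    (N : ℕ) (hN : 2 ≤ N) (α β ε : ℝ) (hε : 0 < ε) (a : Fin N → ℝ)
    (ha : ∀ i, ∃ m : ℤ, a i = m * Real.pi) :
    (linJ N α β ε a).charpoly =
      X * (X + C ε) ^ (N * (N - 1) + 1) *
        (X ^ 2 + C (ε - Real.cos α * Real.sin β) * X - C (ε * Real.sin (α + β))) ^ (N - 1) :=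
  charpoly_antipodal_general N hN α β ε a ha
end

section
/- Let N ≥ 3, α, β ∈ ℝ, ε > 0, and let k ∈ {1, …, N−1} be such that neither 2k nor 4k is divisible by N. Let a ∈ ℝ^N be the rotating-wave state a_j = 2πk(j−1)/N for j = 1, …, N. Then the characteristic polynomial over ℂ of the linearization matrix J(a) equals X^{N−2} · (X + ε)^{N(N−1)+1} · (X + ε + (1/2) sin(α−β))^{N−3} · (X² + (ε + (1/2) sin(α−β) − (1/4) i e^{i(α+β)}) X − (ε/2) i e^{i(α+β)}) · (X² + (ε + (1/2) sin(α−β) + (1/4) i e^{−i(α+β)}) X + (ε/2) i e^{−i(α+β)}). -/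
open Real Matrix Polynomial

private lemma detBlockAux {n m : Type*} [Fintype n] [Fintype m] [DecidableEq n] [DecidableEq m]
    {R : Type*} [CommRing R] (A : Matrix n n R) (B : Matrix n m R) (C : Matrix m n R) (d : R) :
    (Matrix.fromBlocks A B C (d • (1 : Matrix m m R))).det * d ^ (Fintype.card n)
      = (d • A - B * C).det * d ^ (Fintype.card m) := by
  have h : (Matrix.fromBlocks A B C (d • (1 : Matrix m m R)))
        * (Matrix.fromBlocks (d • (1 : Matrix n n R)) 0 (-C) 1)
      = Matrix.fromBlocks (d • A - B * C) B 0 (d • (1 : Matrix m m R)) := by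
    rw [Matrix.fromBlocks_multiply]
    simp [Matrix.mul_smul, Matrix.smul_mul, sub_eq_add_neg]
  have hdet := congrArg Matrix.det h
  rw [Matrix.det_mul, Matrix.det_fromBlocks_zero₁₂, Matrix.det_fromBlocks_zero₂₁,
    Matrix.det_smul, Matrix.det_smul, Matrix.det_one, Matrix.det_one] at hdet
  rw [mul_one, mul_one] at hdet
  linear_combination hdet

private lemma geomSumFin (N : ℕ) (hN : N ≠ 0) (x : ℂ) (hx : x ^ N = 1) :
    ∑ l : Fin N, x ^ (l : ℕ) = if x = 1 then (N : ℂ) else 0 := by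
  rw [Fin.sum_univ_eq_sum_range]
  split_ifs with h
  · subst h; simp
  · have h2 : x - 1 ≠ 0 := sub_ne_zero.mpr h
    have hg := geom_sum_mul x N
    rw [hx, sub_self] at hg
    exact (mul_eq_zero.mp hg).resolve_right h2

private lemma detViaFourier {n : Type*} [Fintype n] [DecidableEq n]
    (M : Matrix n n (Polynomial ℂ)) (F : Matrix n n ℂ) (hF : F.det ≠ 0) (Λ : n → Polynomial ℂ)
    (h : ∀ j m, ∑ l, M j l * Polynomial.C (F l m) = Polynomial.C (F j m) * Λ m) :
    M.det = ∏ m, Λ m := by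
  have hmul : M * F.map Polynomial.C = F.map Polynomial.C * Matrix.diagonal Λ := by
    refine Matrix.ext fun j m => ?_
    rw [Matrix.mul_diagonal, Matrix.mul_apply]
    simpa [Matrix.map_apply] using h j m
  have hdet := congrArg Matrix.det hmul
  have hCdet : (F.map (Polynomial.C : ℂ →+* Polynomial ℂ)).det = Polynomial.C F.det := by
    rw [RingHom.map_det (Polynomial.C : ℂ →+* Polynomial ℂ) F, RingHom.mapMatrix_apply]
  rw [Matrix.det_mul, Matrix.det_mul, Matrix.det_diagonal, hCdet] at hdet
  have hC0 : (Polynomial.C F.det : Polynomial ℂ) ≠ 0 := by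
    simpa using hF
  rw [mul_comm M.det _] at hdet
  exact mul_left_cancel₀ hC0 hdet

private lemma colId (e p q z c1 c0 : ℂ) (h1 : z * c1 = z * e - z * p)
    (h0 : z * c0 = -(e * (z * p) + z * q)) :
    (X + C e) * (X * C z - C (z * p)) - C (z * q)
      = C z * (X ^ 2 + C c1 * X + C c0) := by
  have H1 := congrArg (C : ℂ →+* Polynomial ℂ) h1
  have H0 := congrArg (C : ℂ →+* Polynomial ℂ) h0
  simp only [_root_.map_mul, map_sub, map_neg, _root_.map_add] at H1 H0 ⊢
  linear_combination (-X : Polynomial ℂ) * H1 - H0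

set_option maxHeartbeats 1000000 in
/-- The characteristic polynomial (over `ℂ`) of the linearization at an incoherent
rotating-wave one-cluster state with wave number `k`, `2k, 4k ≢ 0 (mod N)`. -/
theorem charpoly_rotating_wave
    (N : ℕ) (hN : 3 ≤ N) (α β ε : ℝ) (hε : 0 < ε)
    (k : ℕ) (hk1 : 1 ≤ k) (hk2 : k < N)
    (h2k : ¬ (N ∣ 2 * k)) (h4k : ¬ (N ∣ 4 * k))
    (a : Fin N → ℝ)
    (ha : ∀ j : Fin N, a j = 2 * Real.pi * k * (j : ℕ) / N) :
    ((linJ N α β ε a).map (Complex.ofReal)).charpoly =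
      X ^ (N - 2) * (X + C (ε : ℂ)) ^ (N * (N - 1) + 1) *
        (X + C ((ε : ℂ) + (1 / 2) * Complex.ofReal (Real.sin (α - β)))) ^ (N - 3) *
        (X ^ 2
          + C ((ε : ℂ) + (1 / 2) * Complex.ofReal (Real.sin (α - β))
              - (1 / 4) * Complex.I * Complex.exp (Complex.I * ((α : ℂ) + (β : ℂ)))) * X
          - C (((ε : ℂ) / 2) * Complex.I * Complex.exp (Complex.I * ((α : ℂ) + (β : ℂ))))) *
        (X ^ 2
          + C ((ε : ℂ) + (1 / 2) * Complex.ofReal (Real.sin (α - β))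
              + (1 / 4) * Complex.I * Complex.exp (-Complex.I * ((α : ℂ) + (β : ℂ)))) * X
          + C (((ε : ℂ) / 2) * Complex.I * Complex.exp (-Complex.I * ((α : ℂ) + (β : ℂ))))) := by
  have hN0 : N ≠ 0 := by omega
  haveI : NeZero N := ⟨hN0⟩
  have hNC : (N : ℂ) ≠ 0 := Nat.cast_ne_zero.mpr hN0
  -- roots of unity
  set ζ : ℂ := Complex.exp (2 * (Real.pi : ℂ) * Complex.I / (N : ℂ)) with hζdef
  have hζ : IsPrimitiveRoot ζ N := by
    rw [hζdef]
    exact Complex.isPrimitiveRoot_exp N hN0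
  have hζN : ζ ^ N = 1 := hζ.pow_eq_one
  have hgeom : ∀ x : ℂ, x ^ N = 1 → ∑ l : Fin N, x ^ (l : ℕ) = if x = 1 then (N : ℂ) else 0 :=
    fun x hx => geomSumFin N hN0 x hx
  have hpowmod : ∀ t : ℕ, ζ ^ (t % N) = ζ ^ t := by
    intro t
    conv_rhs => rw [← Nat.div_add_mod t N]
    rw [pow_add, pow_mul, hζN, one_pow, one_mul]
  set w : ℂ := ζ ^ (2 * k) with hwdef
  have hwN : w ^ N = 1 := by rw [hwdef, ← pow_mul, mul_comm (2 * k) N, pow_mul, hζN, one_pow]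
  have hw1 : w ≠ 1 := fun h => h2k ((hζ.pow_eq_one_iff_dvd _).mp h)
  have hw0 : w ≠ 0 := by
    intro h
    rw [h, zero_pow hN0] at hwN
    exact zero_ne_one hwN
  have hw2 : w * w ≠ 1 := by
    intro h
    apply h4k
    refine (hζ.pow_eq_one_iff_dvd _).mp ?_
    rw [show 4 * k = 2 * k + 2 * k by ring, pow_add]
    exact h
  have hwinv1 : w⁻¹ ≠ 1 := by rw [ne_eq, inv_eq_one]; exact hw1
  have hwinvN : w⁻¹ ^ N = 1 := by rw [inv_pow, hwN, inv_one]
  have sumw : ∑ l : Fin N, w ^ (l : ℕ) = 0 := by rw [hgeom w hwN, if_neg hw1]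
  have sumwinv : ∑ l : Fin N, (w ^ (l : ℕ))⁻¹ = 0 := by
    have h1 : ∀ l : Fin N, (w ^ (l : ℕ))⁻¹ = (w⁻¹) ^ (l : ℕ) := fun l => (inv_pow w _).symm
    rw [Finset.sum_congr rfl fun l _ => h1 l, hgeom _ hwinvN, if_neg hwinv1]
  set u : ℂ := Complex.exp (Complex.I * ((α : ℂ) + (β : ℂ))) with hudef
  set u' : ℂ := Complex.exp (-Complex.I * ((α : ℂ) + (β : ℂ))) with hu'def
  set sc : ℂ := Complex.ofReal (Real.sin (α - β)) with hscdef
  set ec : ℂ := ((ε : ℝ) : ℂ) with hecdef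
  -- exponentials of phases
  have key2 : ∀ j : Fin N, Complex.exp (2 * ((a j : ℝ) : ℂ) * Complex.I) = w ^ (j : ℕ) := by
    intro j
    have harg : 2 * ((a j : ℝ) : ℂ) * Complex.I
        = ((2 * k * (j : ℕ) : ℕ) : ℂ) * (2 * (Real.pi : ℂ) * Complex.I / (N : ℂ)) := by
      rw [ha j]
      push_cast
      field_simp
    rw [harg, Complex.exp_nat_mul, ← hζdef, pow_mul, hwdef]
  set sg : Fin N → Fin N → ℂ := fun i l => ((Real.sin (2 * (a i - a l) + α + β) : ℝ) : ℂ) with hsgdef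
  have hsigma : ∀ i j : Fin N, sg i j
      = (u' * w ^ (j : ℕ) * (w ^ (i : ℕ))⁻¹ - u * w ^ (i : ℕ) * (w ^ (j : ℕ))⁻¹)
          * Complex.I / 2 := by
    intro i j
    have e1 : Complex.exp (((2 * (a i - a j) + α + β : ℝ) : ℂ) * Complex.I)
        = u * w ^ (i : ℕ) * (w ^ (j : ℕ))⁻¹ := by
      have harg : ((2 * (a i - a j) + α + β : ℝ) : ℂ) * Complex.I
          = 2 * ((a i : ℝ) : ℂ) * Complex.I + (-(2 * ((a j : ℝ) : ℂ) * Complex.I))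
            + Complex.I * ((α : ℂ) + (β : ℂ)) := by push_cast; ring
      rw [harg, Complex.exp_add, Complex.exp_add, Complex.exp_neg, key2 i, key2 j, ← hudef]
      ring
    have e2 : Complex.exp (-((2 * (a i - a j) + α + β : ℝ) : ℂ) * Complex.I)
        = u' * w ^ (j : ℕ) * (w ^ (i : ℕ))⁻¹ := by
      have harg : -((2 * (a i - a j) + α + β : ℝ) : ℂ) * Complex.I
          = 2 * ((a j : ℝ) : ℂ) * Complex.I + (-(2 * ((a i : ℝ) : ℂ) * Complex.I))
            + -Complex.I * ((α : ℂ) + (β : ℂ)) := by push_cast; ring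
      rw [harg, Complex.exp_add, Complex.exp_add, Complex.exp_neg, key2 j, key2 i, ← hu'def]
      ring
    show ((Real.sin (2 * (a i - a j) + α + β) : ℝ) : ℂ) = _
    rw [Complex.ofReal_sin, Complex.sin, e1, e2]
  have hwpow0 : ∀ i : Fin N, w ^ (i : ℕ) ≠ 0 := fun i => pow_ne_zero _ hw0
  have hsθ : ∀ i : Fin N, sg i i = (u' - u) * Complex.I / 2 := by
    intro i
    rw [hsigma i i]
    have h1 : w ^ (i : ℕ) * (w ^ (i : ℕ))⁻¹ = 1 := mul_inv_cancel₀ (hwpow0 i)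
    field_simp
  have hu_sin : (u' - u) * Complex.I / 2 = ((Real.sin (α + β) : ℝ) : ℂ) := by
    rw [Complex.ofReal_sin, Complex.sin]
    have h1 : ((α + β : ℝ) : ℂ) * Complex.I = Complex.I * ((α : ℂ) + (β : ℂ)) := by
      push_cast; ring
    have h2 : -((α + β : ℝ) : ℂ) * Complex.I = -Complex.I * ((α : ℂ) + (β : ℂ)) := by
      push_cast; ring
    rw [h1, h2, ← hudef, ← hu'def]
  have hrow0 : ∀ i : Fin N, ∑ l : Fin N, sg i l = 0 := by
    intro i
    have hpt : ∀ l : Fin N, sg i l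
        = Complex.I / 2 * u' * (w ^ (i : ℕ))⁻¹ * w ^ (l : ℕ)
          - Complex.I / 2 * u * w ^ (i : ℕ) * (w ^ (l : ℕ))⁻¹ := by
      intro l; rw [hsigma i l]; ring
    rw [Finset.sum_congr rfl fun l _ => hpt l, Finset.sum_sub_distrib, ← Finset.mul_sum,
      ← Finset.mul_sum, sumw, sumwinv, mul_zero, mul_zero, sub_zero]
  have hprodc : ∀ i j : Fin N,
      ((Real.sin (a i - a j + α) : ℝ) : ℂ) * ((Real.cos (a i - a j + β) : ℝ) : ℂ)
        = (sg i j + sc) / 2 := by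
    intro i j
    have hr0 : ∀ x y : ℝ, Real.sin x * Real.cos y
        = (Real.sin (x + y) + Real.sin (x - y)) / 2 := by
      intro x y
      rw [Real.sin_add, Real.sin_sub]
      ring
    have hr := hr0 (a i - a j + α) (a i - a j + β)
    rw [show (a i - a j + α) + (a i - a j + β) = 2 * (a i - a j) + α + β by ring,
      show (a i - a j + α) - (a i - a j + β) = α - β by ring] at hr
    rw [← Complex.ofReal_mul, hr]
    rw [hsgdef, hscdef]
    push_cast
    ring
  have hkr : ((Real.sin (α + β) : ℝ) : ℂ) - sc
      = 2 * ((Real.sin β : ℝ) : ℂ) * ((Real.cos α : ℝ) : ℂ) := by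
    have h : Real.sin (α + β) - Real.sin (α - β) = 2 * Real.sin β * Real.cos α := by
      rw [Real.sin_add, Real.sin_sub]; ring
    rw [hscdef, ← Complex.ofReal_sub]
    rw [h]
    push_cast
    ring
  -- complexified blocks
  set A2 : Matrix (Fin N) (Fin N) ℂ := (linA N α β a).map Complex.ofReal with hA2def
  set B2 : Matrix (Fin N) (Fin N × Fin N) ℂ := (linB N α a).map Complex.ofReal with hB2def
  set C2 : Matrix (Fin N × Fin N) (Fin N) ℂ := (linC N β ε a).map Complex.ofReal with hC2def
  set M1 : Matrix (Fin N) (Fin N) (Polynomial ℂ) :=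
    (X + Polynomial.C ec) • A2.charmatrix - (B2 * C2).map Polynomial.C with hM1def
  have hcharm : ((linJ N α β ε a).map Complex.ofReal).charpoly * (X + Polynomial.C ec) ^ N
      = M1.det * (X + Polynomial.C ec) ^ (N * N) := by
    have hmap : (linJ N α β ε a).map Complex.ofReal
        = Matrix.fromBlocks A2 B2 C2
            (-(ec • (1 : Matrix (Fin N × Fin N) (Fin N × Fin N) ℂ))) := by
      rw [linJ, Matrix.fromBlocks_map, ← hA2def, ← hB2def, ← hC2def]
      have h4 : ((-(ε • (1 : Matrix (Fin N × Fin N) (Fin N × Fin N) ℝ))).map Complex.ofReal)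
          = -(ec • (1 : Matrix (Fin N × Fin N) (Fin N × Fin N) ℂ)) := by
        refine Matrix.ext fun p q => ?_
        simp only [Matrix.map_apply, Matrix.neg_apply, Matrix.smul_apply, Matrix.one_apply,
          smul_eq_mul]
        split_ifs <;> simp [hecdef]
      rw [h4]
    have hDD : (-(ec • (1 : Matrix (Fin N × Fin N) (Fin N × Fin N) ℂ))).charmatrix
        = (X + Polynomial.C ec) • (1 : Matrix (Fin N × Fin N) (Fin N × Fin N) (Polynomial ℂ)) := by
      refine Matrix.ext fun p q => ?_
      by_cases h : p = q
      · subst h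
        simp [Matrix.charmatrix_apply_eq, Matrix.one_apply, Matrix.smul_apply, sub_neg_eq_add]
      · simp [Matrix.charmatrix_apply_ne _ _ _ h, Matrix.one_apply, h, Matrix.smul_apply]
    have hred := detBlockAux A2.charmatrix (-(B2.map Polynomial.C)) (-(C2.map Polynomial.C))
      (X + Polynomial.C ec)
    rw [Fintype.card_fin, Fintype.card_prod, Fintype.card_fin] at hred
    have hM1eq : (X + Polynomial.C ec) • A2.charmatrix
        - (-(B2.map Polynomial.C)) * (-(C2.map Polynomial.C)) = M1 := by
      rw [hM1def, Matrix.neg_mul, Matrix.mul_neg, neg_neg, Matrix.map_mul]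
    rw [hM1eq] at hred
    rw [Matrix.charpoly, hmap, Matrix.charmatrix_fromBlocks, hDD]
    exact hred
  -- Fourier (Vandermonde) matrix
  set F : Matrix (Fin N) (Fin N) ℂ := Matrix.vandermonde (fun j : Fin N => ζ ^ (j : ℕ)) with hFdef
  have hFdet : F.det ≠ 0 := by
    rw [hFdef, Matrix.det_vandermonde]
    refine Finset.prod_ne_zero_iff.mpr fun i _ => Finset.prod_ne_zero_iff.mpr fun j hj => ?_
    rw [Finset.mem_Ioi] at hj
    refine sub_ne_zero.mpr fun hcon => ?_
    exact absurd (Fin.val_injective (hζ.pow_inj j.2 i.2 hcon)) (Fin.ne_of_gt hj)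
  set q1 : Polynomial ℂ := X ^ 2
      + Polynomial.C (ec + 1 / 2 * sc - 1 / 4 * Complex.I * u) * X
      - Polynomial.C (ec / 2 * Complex.I * u) with hq1def
  set q2 : Polynomial ℂ := X ^ 2
      + Polynomial.C (ec + 1 / 2 * sc + 1 / 4 * Complex.I * u') * X
      + Polynomial.C (ec / 2 * Complex.I * u') with hq2def
  set gq : Polynomial ℂ := X + Polynomial.C (ec + 1 / 2 * sc) with hgqdef
  set Λ : Fin N → Polynomial ℂ := fun m =>
    if ζ ^ (m : ℕ) = 1 then X * (X + Polynomial.C ec)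
    else if ζ ^ (m : ℕ) = w then q1
    else if ζ ^ (m : ℕ) * w = 1 then q2
    else X * gq with hΛdef
  have hcol : ∀ j m : Fin N, ∑ l, M1 j l * Polynomial.C (F l m)
      = Polynomial.C (F j m) * Λ m := by
    intro j m
    set t : ℂ := ζ ^ (m : ℕ) with htdef
    have htN : t ^ N = 1 := by rw [htdef, ← pow_mul, mul_comm, pow_mul, hζN, one_pow]
    have hFlm : ∀ l : Fin N, F l m = t ^ (l : ℕ) := by
      intro l
      rw [hFdef, Matrix.vandermonde_apply, htdef, ← pow_mul, ← pow_mul, mul_comm]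
    set St : ℂ := ∑ l : Fin N, t ^ (l : ℕ) with hStdef
    set S2 : ℂ := ∑ l : Fin N, (w ^ (l : ℕ))⁻¹ * t ^ (l : ℕ) with hS2def
    set S3 : ℂ := ∑ l : Fin N, w ^ (l : ℕ) * t ^ (l : ℕ) with hS3def
    set Dv : ℂ := Complex.I / 2 * (u' * (w ^ (j : ℕ))⁻¹ * S3 - u * w ^ (j : ℕ) * S2) with hDvdef
    have hS2pt : ∀ l : Fin N, (w ^ (l : ℕ))⁻¹ * t ^ (l : ℕ) = (w⁻¹ * t) ^ (l : ℕ) := by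
      intro l; rw [mul_pow, inv_pow]
    have hS3pt : ∀ l : Fin N, w ^ (l : ℕ) * t ^ (l : ℕ) = (w * t) ^ (l : ℕ) := by
      intro l; rw [mul_pow]
    have hS2N : (w⁻¹ * t) ^ N = 1 := by rw [mul_pow, inv_pow, hwN, htN, inv_one, one_mul]
    have hS3N : (w * t) ^ N = 1 := by rw [mul_pow, hwN, htN, one_mul]
    have hsumσ : ∑ l : Fin N, sg j l * t ^ (l : ℕ) = Dv := by
      have hpt : ∀ l : Fin N, sg j l * t ^ (l : ℕ)
          = Complex.I / 2 * u' * (w ^ (j : ℕ))⁻¹ * (w ^ (l : ℕ) * t ^ (l : ℕ))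
            - Complex.I / 2 * u * w ^ (j : ℕ) * ((w ^ (l : ℕ))⁻¹ * t ^ (l : ℕ)) := by
        intro l; rw [hsigma j l]; ring
      rw [Finset.sum_congr rfl fun l _ => hpt l, Finset.sum_sub_distrib, ← Finset.mul_sum,
        ← Finset.mul_sum, ← hS3def, ← hS2def, hDvdef]
      ring
    have hA2app_ne : ∀ l : Fin N, j ≠ l → A2 j l = 1 / (2 * (N : ℂ)) * (sc - sg j l) := by
      intro l h
      rw [hA2def]
      simp only [Matrix.map_apply, linA, Matrix.of_apply, if_neg h]
      push_cast [-Complex.ofReal_sin, -Complex.ofReal_cos]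
      simp only [hsgdef]
      try rw [← hscdef]
    have hA2diag : A2 j j = -(1 / 2) * sc
        - 1 / (N : ℂ) * ((Real.sin β : ℝ) : ℂ) * ((Real.cos α : ℝ) : ℂ) := by
      rw [hA2def]
      simp only [Matrix.map_apply, linA, Matrix.of_apply, if_pos rfl]
      push_cast [-Complex.ofReal_sin, -Complex.ofReal_cos]
      have h0 : ∑ l : Fin N, ((Real.sin (2 * (a j - a l) + α + β) : ℝ) : ℂ) = 0 := hrow0 j
      rw [h0, mul_zero, add_zero, ← hscdef]
    have hNN : (N : ℂ) * ((N : ℂ))⁻¹ = 1 := mul_inv_cancel₀ hNC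
    have hdval : A2 j j - 1 / (2 * (N : ℂ)) * (sc - sg j j) = -(sc / 2) := by
      rw [hA2diag, hsθ j, hu_sin]
      linear_combination (1 / (2 * (N : ℂ))) * hkr
    have hAsum : ∑ l : Fin N, A2 j l * t ^ (l : ℕ)
        = 1 / (2 * (N : ℂ)) * (sc * St - Dv) - sc / 2 * t ^ (j : ℕ) := by
      have hsplit : ∀ l : Fin N, A2 j l * t ^ (l : ℕ)
          = 1 / (2 * (N : ℂ)) * (sc - sg j l) * t ^ (l : ℕ)
            + (if j = l then (A2 j j - 1 / (2 * (N : ℂ)) * (sc - sg j j)) * t ^ (j : ℕ)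
              else 0) := by
        intro l
        by_cases h : j = l
        · subst h
          rw [if_pos rfl]
          ring
        · rw [if_neg h, hA2app_ne l h, add_zero]
      rw [Finset.sum_congr rfl fun l _ => hsplit l, Finset.sum_add_distrib,
        Finset.sum_ite_eq, if_pos (Finset.mem_univ j), hdval]
      have hgsum : ∑ l : Fin N, 1 / (2 * (N : ℂ)) * (sc - sg j l) * t ^ (l : ℕ)
          = 1 / (2 * (N : ℂ)) * (sc * St - Dv) := by
        have hpt : ∀ l : Fin N, 1 / (2 * (N : ℂ)) * (sc - sg j l) * t ^ (l : ℕ)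
            = 1 / (2 * (N : ℂ)) * sc * t ^ (l : ℕ)
              - 1 / (2 * (N : ℂ)) * (sg j l * t ^ (l : ℕ)) := fun l => by ring
        rw [Finset.sum_congr rfl fun l _ => hpt l, Finset.sum_sub_distrib, ← Finset.mul_sum,
          ← Finset.mul_sum, hsumσ, ← hStdef]
        ring
      rw [hgsum]
      ring
    have hBCsum : ∑ l : Fin N, (B2 * C2) j l * t ^ (l : ℕ)
        = -(ec / (2 * (N : ℂ))) * (Dv + sc * St - (N : ℂ) * sc * t ^ (j : ℕ)) := by
      have hinner : ∀ q : Fin N, (∑ l : Fin N, C2 (j, q) l * t ^ (l : ℕ))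
          = if j = q then 0
            else ec * ((Real.cos (a j - a q + β) : ℝ) : ℂ)
              * (t ^ (q : ℕ) - t ^ (j : ℕ)) := by
        intro q
        by_cases h : j = q
        · rw [if_pos h]
          refine Finset.sum_eq_zero fun l _ => ?_
          rw [hC2def]
          simp only [Matrix.map_apply, linC, Matrix.of_apply]
          rw [if_pos h]
          simp
        · rw [if_neg h]
          have hpt : ∀ l : Fin N, C2 (j, q) l * t ^ (l : ℕ)
              = (if l = j then -ec * ((Real.cos (a j - a q + β) : ℝ) : ℂ) * t ^ (j : ℕ) else 0)
                + (if l = q then ec * ((Real.cos (a j - a q + β) : ℝ) : ℂ) * t ^ (q : ℕ)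
                  else 0) := by
            intro l
            rw [hC2def]
            simp only [Matrix.map_apply, linC, Matrix.of_apply]
            rw [if_neg h]
            by_cases h1 : l = j
            · subst h1
              rw [if_pos rfl, if_pos rfl, if_neg (fun hc : l = q => h hc)]
              push_cast
              ring
            · rw [if_neg h1, if_neg h1, zero_add]
              by_cases h2 : l = q
              · subst h2
                rw [if_pos rfl, if_pos rfl]
                push_cast
                ring
              · rw [if_neg h2, if_neg h2]
                simp
          rw [Finset.sum_congr rfl fun l _ => hpt l, Finset.sum_add_distrib,
            Finset.sum_ite_eq', Finset.sum_ite_eq', if_pos (Finset.mem_univ j),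
            if_pos (Finset.mem_univ q)]
          ring
      have houter : ∑ l : Fin N, (B2 * C2) j l * t ^ (l : ℕ)
          = ∑ q : Fin N, B2 j (j, q) * (if j = q then 0
              else ec * ((Real.cos (a j - a q + β) : ℝ) : ℂ)
                * (t ^ (q : ℕ) - t ^ (j : ℕ))) := by
        have h1 : ∑ l : Fin N, (B2 * C2) j l * t ^ (l : ℕ)
            = ∑ p : Fin N × Fin N, B2 j p * (∑ l : Fin N, C2 p l * t ^ (l : ℕ)) := by
          simp only [Matrix.mul_apply, Finset.sum_mul]
          rw [Finset.sum_comm]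
          refine Finset.sum_congr rfl fun p _ => ?_
          rw [Finset.mul_sum]
          refine Finset.sum_congr rfl fun l _ => ?_
          ring
        rw [h1, Fintype.sum_prod_type]
        have h2 : ∀ q1 q2 : Fin N, B2 j (q1, q2) * (∑ l : Fin N, C2 (q1, q2) l * t ^ (l : ℕ))
            = if j = q1 then B2 j (j, q2) * (∑ l : Fin N, C2 (j, q2) l * t ^ (l : ℕ))
              else 0 := by
          intro q1 q2
          by_cases h : j = q1
          · subst h
            rw [if_pos rfl]
          · rw [if_neg h]
            have hB0 : B2 j (q1, q2) = 0 := by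
              rw [hB2def]
              simp only [Matrix.map_apply, linB, Matrix.of_apply]
              rw [if_neg h]
              simp
            rw [hB0, zero_mul]
        have h3 : ∀ q1 : Fin N, (∑ q2 : Fin N, (if j = q1
              then B2 j (j, q2) * (∑ l : Fin N, C2 (j, q2) l * t ^ (l : ℕ)) else 0))
            = if j = q1 then ∑ q2 : Fin N, B2 j (j, q2)
                * (∑ l : Fin N, C2 (j, q2) l * t ^ (l : ℕ)) else 0 := by
          intro q1
          split_ifs <;> simp
        rw [Finset.sum_congr rfl fun q1 _ =>
          (Finset.sum_congr rfl fun q2 _ => h2 q1 q2).trans (h3 q1),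
          Finset.sum_ite_eq, if_pos (Finset.mem_univ j)]
        exact Finset.sum_congr rfl fun q _ => by rw [hinner q]
      rw [houter]
      have hb : ∀ q : Fin N, B2 j (j, q)
          = -(1 / (N : ℂ)) * ((Real.sin (a j - a q + α) : ℝ) : ℂ) := by
        intro q
        rw [hB2def]
        simp only [Matrix.map_apply, linB, Matrix.of_apply, if_pos rfl]
        push_cast
        ring
      have hpt2 : ∀ q : Fin N, B2 j (j, q) * (if j = q then 0
            else ec * ((Real.cos (a j - a q + β) : ℝ) : ℂ) * (t ^ (q : ℕ) - t ^ (j : ℕ)))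
          = -(ec / (2 * (N : ℂ))) * (sg j q * t ^ (q : ℕ))
            - ec * sc / (2 * (N : ℂ)) * t ^ (q : ℕ)
            + ec / (2 * (N : ℂ)) * t ^ (j : ℕ) * sg j q
            + ec * sc / (2 * (N : ℂ)) * t ^ (j : ℕ) := by
        intro q
        by_cases h : j = q
        · subst h
          rw [if_pos rfl, mul_zero]
          ring
        · rw [if_neg h, hb q]
          have hpc := hprodc j q
          linear_combination (-(1 / (N : ℂ)) * ec * (t ^ (q : ℕ) - t ^ (j : ℕ))) * hpc
      rw [Finset.sum_congr rfl fun q _ => hpt2 q, Finset.sum_add_distrib,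
        Finset.sum_add_distrib, Finset.sum_sub_distrib, ← Finset.mul_sum, ← Finset.mul_sum,
        ← Finset.mul_sum, hsumσ, hrow0 j, ← hStdef, Finset.sum_const, Finset.card_univ,
        Fintype.card_fin]
      simp only [mul_zero, nsmul_eq_mul]
      ring
    have hchar : ∀ l : Fin N, A2.charmatrix j l
        = (if j = l then X else 0) - Polynomial.C (A2 j l) := by
      intro l
      by_cases h : j = l
      · subst h
        rw [Matrix.charmatrix_apply_eq, if_pos rfl]
      · rw [Matrix.charmatrix_apply_ne _ _ _ h, if_neg h, zero_sub]
    have hM1app : ∀ l : Fin N, M1 j l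
        = (X + Polynomial.C ec) * A2.charmatrix j l - Polynomial.C ((B2 * C2) j l) := by
      intro l
      rw [hM1def]
      simp only [Matrix.sub_apply, Matrix.smul_apply, Matrix.map_apply, smul_eq_mul]
    have hstep1 : ∑ l, M1 j l * Polynomial.C (F l m)
        = (X + Polynomial.C ec)
            * (X * Polynomial.C (t ^ (j : ℕ))
              - Polynomial.C (∑ l : Fin N, A2 j l * t ^ (l : ℕ)))
          - Polynomial.C (∑ l : Fin N, (B2 * C2) j l * t ^ (l : ℕ)) := by
      have hAchar : ∑ l : Fin N, A2.charmatrix j l * Polynomial.C (t ^ (l : ℕ))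
          = X * Polynomial.C (t ^ (j : ℕ))
            - Polynomial.C (∑ l : Fin N, A2 j l * t ^ (l : ℕ)) := by
        have hpt : ∀ l : Fin N, A2.charmatrix j l * Polynomial.C (t ^ (l : ℕ))
            = (if j = l then X * Polynomial.C (t ^ (l : ℕ)) else 0)
              - Polynomial.C (A2 j l * t ^ (l : ℕ)) := by
          intro l
          rw [hchar l, _root_.map_mul]
          split_ifs <;> ring
        rw [Finset.sum_congr rfl fun l _ => hpt l, Finset.sum_sub_distrib, Finset.sum_ite_eq,
          if_pos (Finset.mem_univ j), map_sum]
      calc ∑ l, M1 j l * Polynomial.C (F l m)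
          = ∑ l : Fin N, ((X + Polynomial.C ec)
              * (A2.charmatrix j l * Polynomial.C (t ^ (l : ℕ)))
              - Polynomial.C ((B2 * C2) j l * t ^ (l : ℕ))) := by
            refine Finset.sum_congr rfl fun l _ => ?_
            rw [hM1app l, hFlm l, _root_.map_mul]
            ring
        _ = _ := by
            rw [Finset.sum_sub_distrib, ← Finset.mul_sum, hAchar, ← map_sum]
    rw [hstep1, hAsum, hBCsum, hFlm j]
    simp only [hΛdef]
    rw [← htdef]
    by_cases h1 : t = 1
    · rw [if_pos h1]
      have hStv : St = (N : ℂ) := by rw [hStdef, hgeom t htN, if_pos h1]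
      have hS2v : S2 = 0 := by
        rw [hS2def, Finset.sum_congr rfl fun l _ => hS2pt l, hgeom _ hS2N,
          if_neg (by rw [h1, mul_one]; exact hwinv1)]
      have hS3v : S3 = 0 := by
        rw [hS3def, Finset.sum_congr rfl fun l _ => hS3pt l, hgeom _ hS3N, if_neg (by rw [h1, mul_one]; exact hw1)]
      have hDv0 : Dv = 0 := by rw [hDvdef, hS2v, hS3v]; ring
      have htj : t ^ (j : ℕ) = 1 := by rw [h1, one_pow]
      have hp : 1 / (2 * (N : ℂ)) * (sc * St - Dv) - sc / 2 * t ^ (j : ℕ)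
          = t ^ (j : ℕ) * 0 := by
        rw [hDv0, hStv, htj]
        linear_combination (sc / 2) * hNN
      have hq : -(ec / (2 * (N : ℂ))) * (Dv + sc * St - (N : ℂ) * sc * t ^ (j : ℕ))
          = t ^ (j : ℕ) * 0 := by
        rw [hDv0, hStv, htj]
        ring
      have hΛ0 : X * (X + Polynomial.C ec)
          = X ^ 2 + Polynomial.C ec * X + Polynomial.C (0 : ℂ) := by
        rw [map_zero, add_zero]
        ring
      rw [hp, hq, hΛ0]
      exact colId ec 0 0 (t ^ (j : ℕ)) ec 0 (by ring) (by ring)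
    · rw [if_neg h1]
      have hStv : St = 0 := by rw [hStdef, hgeom t htN, if_neg h1]
      by_cases h2 : t = w
      · rw [if_pos h2]
        have hS2v : S2 = (N : ℂ) := by
          rw [hS2def, Finset.sum_congr rfl fun l _ => hS2pt l, hgeom _ hS2N,
            if_pos (by rw [h2, inv_mul_cancel₀ hw0])]
        have hS3v : S3 = 0 := by
          rw [hS3def, Finset.sum_congr rfl fun l _ => hS3pt l, hgeom _ hS3N, if_neg (by rw [h2]; exact hw2)]
        have hDvv : Dv = -(Complex.I / 2) * u * w ^ (j : ℕ) * (N : ℂ) := by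
          rw [hDvdef, hS2v, hS3v]
          ring
        have htj : t ^ (j : ℕ) = w ^ (j : ℕ) := by rw [h2]
        have hp : 1 / (2 * (N : ℂ)) * (sc * St - Dv) - sc / 2 * t ^ (j : ℕ)
            = t ^ (j : ℕ) * (1 / 4 * Complex.I * u - sc / 2) := by
          rw [hDvv, hStv, htj]
          linear_combination (Complex.I * u * w ^ (j : ℕ) / 4) * hNN
        have hq : -(ec / (2 * (N : ℂ))) * (Dv + sc * St - (N : ℂ) * sc * t ^ (j : ℕ))
            = t ^ (j : ℕ) * (ec * sc / 2 + ec * Complex.I * u / 4) := by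
          rw [hDvv, hStv, htj]
          linear_combination (ec * Complex.I * u * w ^ (j : ℕ) / 4
            + ec * sc * w ^ (j : ℕ) / 2) * hNN
        have hq1' : q1 = X ^ 2 + Polynomial.C (ec + 1 / 2 * sc - 1 / 4 * Complex.I * u) * X
            + Polynomial.C (-(ec / 2 * Complex.I * u)) := by
          rw [hq1def, map_neg]
          ring
        rw [hp, hq, hq1']
        exact colId ec (1 / 4 * Complex.I * u - sc / 2) (ec * sc / 2 + ec * Complex.I * u / 4)
          (t ^ (j : ℕ)) (ec + 1 / 2 * sc - 1 / 4 * Complex.I * u) (-(ec / 2 * Complex.I * u))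
          (by ring) (by ring)
      · rw [if_neg h2]
        by_cases h3 : t * w = 1
        · rw [if_pos h3]
          have ht' : t = w⁻¹ := eq_inv_of_mul_eq_one_left (by rw [mul_comm] at h3 ⊢; exact h3)
          have hS2v : S2 = 0 := by
            rw [hS2def, Finset.sum_congr rfl fun l _ => hS2pt l, hgeom _ hS2N,
              if_neg (fun hc => h2 ((inv_mul_eq_one₀ hw0).mp hc).symm)]
          have hS3v : S3 = (N : ℂ) := by
            rw [hS3def, Finset.sum_congr rfl fun l _ => hS3pt l, hgeom _ hS3N, if_pos (by rw [mul_comm]; exact h3)]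
          have hwinvtj : (w ^ (j : ℕ))⁻¹ = t ^ (j : ℕ) := by rw [ht', inv_pow]
          have hDvv : Dv = Complex.I / 2 * u' * t ^ (j : ℕ) * (N : ℂ) := by
            rw [hDvdef, hS2v, hS3v, hwinvtj]
            ring
          have hp : 1 / (2 * (N : ℂ)) * (sc * St - Dv) - sc / 2 * t ^ (j : ℕ)
              = t ^ (j : ℕ) * (-(1 / 4 * Complex.I * u') - sc / 2) := by
            rw [hDvv, hStv]
            linear_combination (-(Complex.I * u' * t ^ (j : ℕ) / 4)) * hNN
          have hq : -(ec / (2 * (N : ℂ))) * (Dv + sc * St - (N : ℂ) * sc * t ^ (j : ℕ))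
              = t ^ (j : ℕ) * (ec * sc / 2 - ec * Complex.I * u' / 4) := by
            rw [hDvv, hStv]
            linear_combination (ec * sc * t ^ (j : ℕ) / 2
              - ec * Complex.I * u' * t ^ (j : ℕ) / 4) * hNN
          have hq2' : q2 = X ^ 2 + Polynomial.C (ec + 1 / 2 * sc + 1 / 4 * Complex.I * u') * X
              + Polynomial.C (ec / 2 * Complex.I * u') := by
            rw [hq2def]
          rw [hp, hq, hq2']
          exact colId ec (-(1 / 4 * Complex.I * u') - sc / 2)
            (ec * sc / 2 - ec * Complex.I * u' / 4) (t ^ (j : ℕ))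
            (ec + 1 / 2 * sc + 1 / 4 * Complex.I * u') (ec / 2 * Complex.I * u')
            (by ring) (by ring)
        · rw [if_neg h3]
          have hS2v : S2 = 0 := by
            rw [hS2def, Finset.sum_congr rfl fun l _ => hS2pt l, hgeom _ hS2N,
              if_neg (fun hc => h2 ((inv_mul_eq_one₀ hw0).mp hc).symm)]
          have hS3v : S3 = 0 := by
            rw [hS3def, Finset.sum_congr rfl fun l _ => hS3pt l, hgeom _ hS3N, if_neg (fun hc => h3 (by rw [mul_comm]; exact hc))]
          have hDv0 : Dv = 0 := by rw [hDvdef, hS2v, hS3v]; ring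
          have hp : 1 / (2 * (N : ℂ)) * (sc * St - Dv) - sc / 2 * t ^ (j : ℕ)
              = t ^ (j : ℕ) * (-(sc / 2)) := by
            rw [hDv0, hStv]
            ring
          have hq : -(ec / (2 * (N : ℂ))) * (Dv + sc * St - (N : ℂ) * sc * t ^ (j : ℕ))
              = t ^ (j : ℕ) * (ec * sc / 2) := by
            rw [hDv0, hStv]
            linear_combination (ec * sc * t ^ (j : ℕ) / 2) * hNN
          have hgq' : X * gq = X ^ 2 + Polynomial.C (ec + 1 / 2 * sc) * X
              + Polynomial.C (0 : ℂ) := by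
            rw [hgqdef, map_zero, add_zero]
            ring
          rw [hp, hq, hgq']
          exact colId ec (-(sc / 2)) (ec * sc / 2) (t ^ (j : ℕ)) (ec + 1 / 2 * sc) 0
            (by ring) (by ring)
  have hdetM1 : M1.det = ∏ m, Λ m := detViaFourier M1 F hFdet Λ hcol
  -- special wave indices
  have hrlt : 2 * k % N < N := Nat.mod_lt _ (by omega)
  have hrpos : 0 < 2 * k % N := Nat.pos_of_ne_zero fun h => h2k (Nat.dvd_of_mod_eq_zero h)
  set m1 : Fin N := ⟨2 * k % N, hrlt⟩ with hm1def
  set m2 : Fin N := ⟨N - 2 * k % N, by omega⟩ with hm2def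
  have hzm1 : ζ ^ (m1 : ℕ) = w := by
    rw [hwdef]
    exact hpowmod (2 * k)
  have hzm2w : ζ ^ (m2 : ℕ) * w = 1 := by
    rw [hwdef, ← pow_add]
    have h2kmod := Nat.div_add_mod (2 * k) N
    have harith : (N - 2 * k % N) + 2 * k = N * (2 * k / N + 1) := by
      rw [Nat.mul_add, Nat.mul_one]
      omega
    rw [show (m2 : ℕ) = N - 2 * k % N from rfl, harith, pow_mul, hζN, one_pow]
  have hΛzero : Λ 0 = X * (X + Polynomial.C ec) := by
    have hv0 : ζ ^ ((0 : Fin N) : ℕ) = 1 := by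
      rw [show ((0 : Fin N) : ℕ) = 0 from rfl, pow_zero]
    simp only [hΛdef]
    rw [if_pos hv0]
  have hΛone : Λ m1 = q1 := by
    simp only [hΛdef]
    rw [hzm1, if_neg hw1, if_pos rfl]
  have hΛtwo : Λ m2 = q2 := by
    simp only [hΛdef]
    have hne1 : ζ ^ (m2 : ℕ) ≠ 1 := by
      intro hc
      have h' := hzm2w
      rw [hc, one_mul] at h'
      exact hw1 h'
    have hnew : ζ ^ (m2 : ℕ) ≠ w := by
      intro hc
      have h' := hzm2w
      rw [hc] at h'
      exact hw2 h'
    rw [if_neg hne1, if_neg hnew, if_pos hzm2w]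
  have hm1ne0 : m1 ≠ 0 := by
    intro hc
    have h' : (m1 : ℕ) = 0 := by rw [hc]; rfl
    have h'' : (m1 : ℕ) = 2 * k % N := rfl
    omega
  have hm2ne0 : m2 ≠ 0 := by
    intro hc
    have h' : (m2 : ℕ) = 0 := by rw [hc]; rfl
    have h'' : (m2 : ℕ) = N - 2 * k % N := rfl
    omega
  have hm1nem2 : m1 ≠ m2 := by
    intro hc
    have hvals : 2 * k % N = N - 2 * k % N := congrArg Fin.val hc
    apply h4k
    have h2kmod := Nat.div_add_mod (2 * k) N
    have hNq : N * (2 * (2 * k / N) + 1) = 2 * (N * (2 * k / N)) + N := by ring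
    exact ⟨2 * (2 * k / N) + 1, by omega⟩
  have hgen : ∀ mm : Fin N, mm ∉ ({0, m1, m2} : Finset (Fin N)) → Λ mm = X * gq := by
    intro mm hmm
    simp only [Finset.mem_insert, Finset.mem_singleton, not_or] at hmm
    obtain ⟨hmm0, hmm1, hmm2⟩ := hmm
    have hne1 : ζ ^ (mm : ℕ) ≠ 1 := by
      intro hc
      have hdvd := (hζ.pow_eq_one_iff_dvd _).mp hc
      have hv : (mm : ℕ) = 0 := Nat.eq_zero_of_dvd_of_lt hdvd mm.2
      exact hmm0 (Fin.ext hv)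
    have hnew : ζ ^ (mm : ℕ) ≠ w := by
      intro hc
      exact hmm1 (Fin.ext (hζ.pow_inj mm.2 hrlt (by rw [hc, ← hzm1])))
    have hne3 : ζ ^ (mm : ℕ) * w ≠ 1 := by
      intro hc
      apply hmm2
      apply Fin.ext
      have hd1 : N ∣ (mm : ℕ) + 2 * k := by
        refine (hζ.pow_eq_one_iff_dvd _).mp ?_
        rw [pow_add, ← hwdef]
        exact hc
      have hd2 : N ∣ (m2 : ℕ) + 2 * k := by
        refine (hζ.pow_eq_one_iff_dvd _).mp ?_
        rw [pow_add, ← hwdef]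
        exact hzm2w
      have e1 : ((mm : ℕ) + 2 * k) ≡ ((m2 : ℕ) + 2 * k) [MOD N] :=
        ((Nat.modEq_zero_iff_dvd).mpr hd1).trans ((Nat.modEq_zero_iff_dvd).mpr hd2).symm
      have e2 : (mm : ℕ) ≡ (m2 : ℕ) [MOD N] := Nat.ModEq.add_right_cancel' (2 * k) e1
      have e3 : (mm : ℕ) % N = (m2 : ℕ) % N := e2
      rw [Nat.mod_eq_of_lt mm.2, Nat.mod_eq_of_lt m2.2] at e3
      exact e3
    simp only [hΛdef]
    rw [if_neg hne1, if_neg hnew, if_neg hne3]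
  have h0nm : (0 : Fin N) ∉ ({m1, m2} : Finset (Fin N)) := by
    simp only [Finset.mem_insert, Finset.mem_singleton]
    push_neg
    exact ⟨fun hc => hm1ne0 hc.symm, fun hc => hm2ne0 hc.symm⟩
  have h1nm : m1 ∉ ({m2} : Finset (Fin N)) := by
    simp only [Finset.mem_singleton]
    exact hm1nem2
  have hprodΛ : ∏ mm : Fin N, Λ mm
      = X * (X + Polynomial.C ec) * q1 * q2 * (X * gq) ^ (N - 3) := by
    have hsub : ({0, m1, m2} : Finset (Fin N)) ⊆ Finset.univ := Finset.subset_univ _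
    rw [← Finset.prod_sdiff hsub]
    have hS : ∏ mm ∈ ({0, m1, m2} : Finset (Fin N)), Λ mm = Λ 0 * (Λ m1 * Λ m2) := by
      rw [Finset.prod_insert h0nm, Finset.prod_insert h1nm, Finset.prod_singleton]
    have hcard : (Finset.univ \ ({0, m1, m2} : Finset (Fin N))).card = N - 3 := by
      rw [Finset.card_sdiff_of_subset hsub, Finset.card_univ, Fintype.card_fin,
        Finset.card_insert_of_notMem h0nm, Finset.card_insert_of_notMem h1nm,
        Finset.card_singleton]
    rw [Finset.prod_congr rfl (fun mm hmm => hgen mm (Finset.mem_sdiff.mp hmm).2),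
      Finset.prod_const, hcard, hS, hΛzero, hΛone, hΛtwo]
    ring
  -- endgame
  have hdne : (X + Polynomial.C ec) ≠ (0 : Polynomial ℂ) := Polynomial.X_add_C_ne_zero ec
  apply mul_right_cancel₀ (pow_ne_zero N hdne)
  rw [hcharm, hdetM1, hprodΛ]
  have hfinal : ∀ QQ1 QQ2 GG DD XX : Polynomial ℂ,
      XX * DD * QQ1 * QQ2 * (XX * GG) ^ (N - 3) * DD ^ (N * N)
        = XX ^ (N - 2) * DD ^ (N * (N - 1) + 1) * GG ^ (N - 3) * QQ1 * QQ2 * DD ^ N := by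
    intro QQ1 QQ2 GG DD XX
    have h1 : N * (N - 1) + 1 + N = N * N + 1 := by
      have h2 : N * (N - 1) + N = N * N := by
        have h3 : N - 1 + 1 = N := by omega
        calc N * (N - 1) + N = N * (N - 1 + 1) := by ring
          _ = N * N := by rw [h3]
      omega
    calc XX * DD * QQ1 * QQ2 * (XX * GG) ^ (N - 3) * DD ^ (N * N)
        = XX ^ ((N - 3) + 1) * DD ^ (N * N + 1) * GG ^ (N - 3) * QQ1 * QQ2 := by
          rw [mul_pow, pow_succ, pow_succ]
          ring
      _ = XX ^ (N - 2) * (DD ^ (N * (N - 1) + 1) * DD ^ N) * GG ^ (N - 3) * QQ1 * QQ2 := by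
          rw [← pow_add, h1, show (N - 3) + 1 = N - 2 by omega]
      _ = XX ^ (N - 2) * DD ^ (N * (N - 1) + 1) * GG ^ (N - 3) * QQ1 * QQ2 * DD ^ N := by
          ring
  exact hfinal q1 q2 gq (X + Polynomial.C ec) X
end

section
/- Let N ≥ 2, α, β ∈ ℝ, ε > 0, and let a ∈ ℝ^N be such that every a_i lies in {0, π/2, π, 3π/2} (modulo 2π) and Σ_{j=1}^N exp(2 i a_j) = 0 (a 4-phase cluster of splay type). Then the characteristic polynomial of the linearization matrix J(a) equals X^{N−1} · (X + ε)^{N(N−1)+1} · (X + ε + (1/2) sin(α−β))^{N−2} · (X² + (ε + sin α cos β) X + ε sin(α+β)). -/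
/-!
At a 4-phase cluster every `c i = cos (2 a i)` is `±1` and `sin (2 a i) = 0`, so
`sin (2 (a i - a j) + γ) = c i c j sin γ`. Hence `A` and `B C` are both combinations of the
identity, the all-ones matrix `1 1ᵀ` and `c cᵀ`, and the splay condition says `c ⊥ 1`.
Since the coupling block is the scalar `-ε`, a Schur complement reduces `det (X - J)` to
`(X + ε) ^ (N² - N) det ((X + ε)(X - A) - B C)`, and `(X + ε)(X - A) - B C = p + q 1 1ᵀ + r c cᵀ`
has determinant `p ^ (N - 2) (p + N q) (p + N r)` by the Weinstein–Aronszajn identity for the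
rank-two factor `[1 c]`. Everything is computed in `ℝ[X]`, multiplying by powers of `X + ε`
and of `p` instead of inverting them.
-/

open Real Matrix Polynomial

namespace Matrix

variable {m n R : Type*} [Fintype m] [Fintype n] [DecidableEq m] [DecidableEq n] [CommRing R]

theorem det_fromBlocks_smul_one₂₂_mul_pow (P : Matrix m m R) (Q : Matrix m n R)
    (S : Matrix n m R) (s : R) :
    (fromBlocks P Q S (s • 1)).det * s ^ Fintype.card m =
      s ^ Fintype.card n * (s • P - Q * S).det := by
  have hfactor : fromBlocks P Q S (s • 1) * fromBlocks (s • 1) 0 (-S) 1 =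
      fromBlocks (s • P - Q * S) Q 0 (s • 1) := by
    simp [fromBlocks_multiply, sub_eq_add_neg]
  have := congrArg det hfactor
  rw [det_mul, det_fromBlocks_zero₁₂, det_fromBlocks_zero₂₁] at this
  simpa [det_smul, mul_comm] using this

theorem pow_card_mul_det_smul_one_add_mul_comm (U : Matrix m n R) (V : Matrix n m R) (s : R) :
    s ^ Fintype.card n * (s • 1 + U * V).det = s ^ Fintype.card m * (s • 1 + V * U).det := by
  have h := det_fromBlocks_smul_one₂₂_mul_pow (1 : Matrix n n R) V (-U) s
  rw [det_fromBlocks_one₁₁, Matrix.mul_neg, sub_neg_eq_add, Matrix.neg_mul, sub_neg_eq_add,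
    smul_one_eq_diagonal] at h
  rw [mul_comm, smul_one_eq_diagonal, h, smul_one_eq_diagonal]

theorem sq_mul_det_smul_one_add_vecMulVec_add_vecMulVec {u w : n → R} (huw : u ⬝ᵥ w = 0)
    (p q r : R) :
    p ^ 2 * (p • 1 + q • vecMulVec u u + r • vecMulVec w w).det =
      p ^ Fintype.card n * ((p + q * (u ⬝ᵥ u)) * (p + r * (w ⬝ᵥ w))) := by
  let U : Matrix n (Fin 2) R := of fun i k => ![u i, w i] k
  let V : Matrix (Fin 2) n R := of fun k j => ![q * u j, r * w j] k
  have hUV : U * V = q • vecMulVec u u + r • vecMulVec w w := by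
    ext i j
    simp only [mul_apply, of_apply, Fin.sum_univ_two, cons_val_zero, cons_val_one,
      cons_val_fin_one, Matrix.add_apply, Matrix.smul_apply, vecMulVec_apply, smul_eq_mul, U, V]
    ring
  have hVU : V * U = !![q * (u ⬝ᵥ u), 0; 0, r * (w ⬝ᵥ w)] := by
    have hwu : w ⬝ᵥ u = 0 := by rw [dotProduct_comm, huw]
    ext k l
    fin_cases k <;> fin_cases l <;>
      simp [U, V, mul_apply, mul_assoc, ← Finset.mul_sum, ← dotProduct.eq_1, huw, hwu]
  have h := pow_card_mul_det_smul_one_add_mul_comm U V p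
  rw [Fintype.card_fin, hUV, hVU] at h
  rw [add_assoc, h, det_fin_two]
  simp

theorem charpoly_fromBlocks_smul_one₂₂_mul_pow (P : Matrix m m R) (Q : Matrix m n R)
    (S : Matrix n m R) (r : R) :
    (fromBlocks P Q S (r • 1)).charpoly * (X - C r) ^ Fintype.card m =
      (X - C r) ^ Fintype.card n * ((X - C r) • charmatrix P - (Q * S).map C).det := by
  have hcharmatrix : charmatrix (r • 1 : Matrix n n R) = (X - C r) • 1 := by
    rw [smul_one_eq_diagonal, smul_one_eq_diagonal, charmatrix_diagonal]
  rw [charpoly, charmatrix_fromBlocks, hcharmatrix, det_fromBlocks_smul_one₂₂_mul_pow,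
    Matrix.neg_mul, Matrix.mul_neg, neg_neg, Matrix.map_mul]

end Matrix

theorem cos_mul_self_eq_one_of_sin_eq_zero {x : ℝ} (h : sin x = 0) : cos x * cos x = 1 := by
  nlinarith [sin_sq_add_cos_sq x]

theorem sin_two_mul_sub_add_add_eq {x y : ℝ} (hx : sin (2 * x) = 0) (hy : sin (2 * y) = 0)
    (α β : ℝ) : sin (2 * (x - y) + α + β) = cos (2 * x) * cos (2 * y) * sin (α + β) := by
  rw [show 2 * (x - y) + α + β = 2 * x - 2 * y + (α + β) by ring, sin_add, sin_sub, cos_sub,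
    hx, hy]
  ring

/-- The factor in parentheses vanishes at `j = k`, matching the zero rows `(k, k)` of `linC`. -/
theorem linB_mul_linC_apply (N : ℕ) (α β ε : ℝ) (a : Fin N → ℝ) (k l : Fin N) :
    (linB N α a * linC N β ε a) k l = ∑ j, ε / N * (sin (a k - a j + α) * cos (a k - a j + β)) *
      ((if k = l then 1 else 0) - (if j = l then 1 else 0)) := by
  rw [mul_apply, Fintype.sum_prod_type, Finset.sum_eq_single k]
  · refine Finset.sum_congr rfl fun j _ => ?_
    by_cases hkj : k = j
    · subst hkj; simp [linC]
    · by_cases hkl : k = l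
      · subst hkl
        simp only [linB, linC, of_apply, hkj, Ne.symm hkj, if_true, if_false]
        ring
      · by_cases hjl : j = l
        · subst hjl
          simp only [linB, linC, of_apply, hkj, Ne.symm hkj, if_true, if_false]
          ring
        · simp [linB, linC, hkj, hkl, hjl, Ne.symm hkl, Ne.symm hjl]
  · intro i _ hik
    exact Finset.sum_eq_zero fun j _ => by simp [linB, Ne.symm hik]
  · simp

theorem C_div_two_mul_mul_natCast {N : ℕ} (hN : N ≠ 0) (x : ℝ) :
    C (x / (2 * N)) * (N : ℝ[X]) = C (1 / 2 * x) := by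
  rw [← map_natCast C, ← map_mul]
  congr 1
  field_simp

section Cluster

variable {N : ℕ} {a : Fin N → ℝ}

theorem linA_eq_of_sin_two_mul_eq_zero (α β : ℝ) (hsin : ∀ i, sin (2 * a i) = 0)
    (hsum : ∑ i, cos (2 * a i) = 0) :
    linA N α β a = (-(sin (α - β) / 2)) • 1 + (sin (α - β) / (2 * N)) • vecMulVec 1 1
      - (sin (α + β) / (2 * N)) • vecMulVec (fun i => cos (2 * a i)) (fun i => cos (2 * a i)) := by
  ext i j
  by_cases hij : i = j
  · subst hij
    simp only [linA, of_apply, if_pos, sin_two_mul_sub_add_add_eq (hsin i) (hsin _),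
      mul_comm _ (sin (α + β)), mul_assoc, ← Finset.mul_sum, hsum]
    simp only [cos_mul_self_eq_one_of_sin_eq_zero (hsin i), sin_add, sin_sub, mul_zero,
      Matrix.add_apply, Matrix.sub_apply, Matrix.smul_apply, one_apply_eq, smul_eq_mul, vecMulVec_apply, Pi.one_apply]
    ring
  · simp only [linA, of_apply, hij, if_false, sin_two_mul_sub_add_add_eq (hsin i) (hsin j),
      Matrix.add_apply, Matrix.sub_apply, Matrix.smul_apply, one_apply_ne hij, smul_eq_mul, vecMulVec_apply,
      Pi.one_apply]
    ring

theorem linB_mul_linC_eq_of_sin_two_mul_eq_zero (α β ε : ℝ) (hsin : ∀ i, sin (2 * a i) = 0)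
    (hsum : ∑ i, cos (2 * a i) = 0) :
    linB N α a * linC N β ε a = (ε * sin (α - β) / 2) • 1
      - (ε * sin (α - β) / (2 * N)) • vecMulVec 1 1
      - (ε * sin (α + β) / (2 * N)) •
          vecMulVec (fun i => cos (2 * a i)) (fun i => cos (2 * a i)) := by
  ext k l
  have hN : (N : ℝ) ≠ 0 := Nat.cast_ne_zero.mpr (Fin.pos k).ne'
  have hprod : ∀ j, sin (a k - a j + α) * cos (a k - a j + β) =
      (cos (2 * a k) * cos (2 * a j) * sin (α + β) + sin (α - β)) / 2 := by
    intro j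
    have h := two_mul_sin_mul_cos (a k - a j + α) (a k - a j + β)
    rw [show a k - a j + α - (a k - a j + β) = α - β by ring,
      show a k - a j + α + (a k - a j + β) = 2 * (a k - a j) + α + β by ring,
      sin_two_mul_sub_add_add_eq (hsin k) (hsin j)] at h
    linarith
  have hrow : ∑ j, ε / N * ((cos (2 * a k) * cos (2 * a j) * sin (α + β) + sin (α - β)) / 2)
      = ε * sin (α - β) / 2 := by
    rw [← Finset.mul_sum, ← Finset.sum_div, Finset.sum_add_distrib, ← Finset.sum_mul,
      ← Finset.mul_sum, hsum]
    simp only [mul_zero, zero_mul, Finset.sum_const, Finset.card_univ, Fintype.card_fin,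
      nsmul_eq_mul, zero_add]
    field_simp
  simp only [linB_mul_linC_apply, hprod, mul_sub, Finset.sum_sub_distrib, mul_ite, mul_one,
    mul_zero, Finset.sum_ite_eq', Finset.mem_univ, if_true, Finset.sum_ite_irrel, hrow]
  by_cases hkl : k = l
  · subst hkl
    simp only [if_true, cos_mul_self_eq_one_of_sin_eq_zero (hsin k), Matrix.sub_apply, Matrix.smul_apply,
      one_apply_eq, smul_eq_mul, vecMulVec_apply, Pi.one_apply, mul_one, one_mul]
    field_simp
    ring
  · simp only [hkl, if_false, Finset.sum_const_zero, zero_sub, Matrix.sub_apply, Matrix.smul_apply,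
      one_apply_ne hkl, smul_eq_mul, vecMulVec_apply, Pi.one_apply, mul_one, mul_zero]
    field_simp
    ring

theorem smul_charmatrix_linA_sub_linB_mul_linC_eq (α β ε : ℝ) (hsin : ∀ i, sin (2 * a i) = 0)
    (hsum : ∑ i, cos (2 * a i) = 0) :
    (X + C ε) • charmatrix (linA N α β a) - (linB N α a * linC N β ε a).map C =
      (X * (X + C (ε + 1 / 2 * sin (α - β)))) • 1 + (-(C (sin (α - β) / (2 * N)) * X)) • vecMulVec 1 1
        + (C (sin (α + β) / (2 * N)) * (X + C (2 * ε))) •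
            vecMulVec (fun i => C (cos (2 * a i))) (fun i => C (cos (2 * a i))) := by
  rw [linA_eq_of_sin_two_mul_eq_zero α β hsin hsum,
    linB_mul_linC_eq_of_sin_two_mul_eq_zero α β ε hsin hsum]
  refine Matrix.ext fun i j => ?_
  by_cases hij : i = j
  · subst hij
    simp only [Matrix.sub_apply, Matrix.add_apply, Matrix.smul_apply, charmatrix_apply_eq, one_apply_eq, map_apply,
      vecMulVec_apply, Pi.one_apply, smul_eq_mul, div_eq_mul_inv, map_sub, map_add, map_neg,
      map_mul, map_ofNat, map_one]
    ring
  · simp only [Matrix.sub_apply, Matrix.add_apply, Matrix.smul_apply, charmatrix_apply_ne _ _ _ hij, one_apply_ne hij,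
      map_apply, vecMulVec_apply, Pi.one_apply, smul_eq_mul, div_eq_mul_inv, map_sub, map_add,
      map_neg, map_mul, map_ofNat, map_one, map_zero]
    ring

theorem charpoly_linJ_mul_pow_mul_sq (hN : N ≠ 0) (α β ε : ℝ)
    (hsin : ∀ i, sin (2 * a i) = 0) (hsum : ∑ i, cos (2 * a i) = 0) :
    (linJ N α β ε a).charpoly * ((X + C ε) ^ N * (X * (X + C (ε + 1 / 2 * sin (α - β)))) ^ 2) =
      (X + C ε) ^ (N * N) * ((X * (X + C (ε + 1 / 2 * sin (α - β)))) ^ N *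
        (X * (X + C ε) * (X ^ 2 + C (ε + sin α * cos β) * X + C (ε * sin (α + β))))) := by
  set c : Fin N → ℝ[X] := fun i => C (cos (2 * a i))
  set s : ℝ[X] := X + C ε
  set p : ℝ[X] := X * (X + C (ε + 1 / 2 * sin (α - β)))
  set q : ℝ[X] := -(C (sin (α - β) / (2 * N)) * X)
  set r : ℝ[X] := C (sin (α + β) / (2 * N)) * (X + C (2 * ε))
  have hone_c : (1 : Fin N → ℝ[X]) ⬝ᵥ c = 0 := by
    simp [c, dotProduct, ← map_sum, hsum]
  have hc_c : c ⬝ᵥ c = N := by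
    simp [c, dotProduct, ← map_mul, cos_mul_self_eq_one_of_sin_eq_zero (hsin _)]
  have hpq : p + q * ((1 : Fin N → ℝ[X]) ⬝ᵥ 1) = X * s := by
    simp only [dotProduct_one, Pi.one_apply, Finset.sum_const, Finset.card_univ,
      Fintype.card_fin, nsmul_eq_mul, mul_one, p, q, s, map_add]
    linear_combination (-X) * C_div_two_mul_mul_natCast hN (sin (α - β))
  have hpr : p + r * c ⬝ᵥ c = X ^ 2 + C (ε + sin α * cos β) * X + C (ε * sin (α + β)) := by
    have hsin_mul_cos : sin α * cos β = 1 / 2 * sin (α - β) + 1 / 2 * sin (α + β) := by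
      rw [sin_sub, sin_add]
      ring
    rw [hc_c, hsin_mul_cos, show ε * sin (α + β) = 2 * ε * (1 / 2 * sin (α + β)) by ring]
    simp only [p, r, map_add, map_mul C (2 * ε)]
    linear_combination (X + C (2 * ε)) * C_div_two_mul_mul_natCast hN (sin (α + β))
  have hschur : (linJ N α β ε a).charpoly * s ^ N =
      s ^ (N * N) * (p • 1 + q • vecMulVec 1 1 + r • vecMulVec c c).det := by
    have h := charpoly_fromBlocks_smul_one₂₂_mul_pow (linA N α β a) (linB N α a)
      (linC N β ε a) (-ε)
    rwa [map_neg, sub_neg_eq_add, neg_smul, Fintype.card_fin, Fintype.card_prod, Fintype.card_fin,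
      smul_charmatrix_linA_sub_linB_mul_linC_eq α β ε hsin hsum] at h
  have hdet := sq_mul_det_smul_one_add_vecMulVec_add_vecMulVec hone_c p q r
  rw [Fintype.card_fin, hpq, hpr] at hdet
  calc (linJ N α β ε a).charpoly * (s ^ N * p ^ 2)
      = s ^ (N * N) * (p ^ 2 * (p • 1 + q • vecMulVec 1 1 + r • vecMulVec c c).det) := by
        rw [← mul_assoc, hschur]
        ring
    _ = _ := by rw [hdet]

end Cluster

theorem charpoly_four_phase_cluster_general
    (N : ℕ) (hN : 2 ≤ N) (α β ε : ℝ) (a : Fin N → ℝ)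
    (ha : ∀ i, ∃ m : ℤ, a i = m * (Real.pi / 2))
    (hsplay : ∑ j, Complex.exp (2 * Complex.I * (a j : ℂ)) = 0) :
    (linJ N α β ε a).charpoly =
      X ^ (N - 1) * (X + C ε) ^ (N * (N - 1) + 1) *
        (X + C (ε + (1 / 2) * Real.sin (α - β))) ^ (N - 2) *
        (X ^ 2 + C (ε + Real.sin α * Real.cos β) * X + C (ε * Real.sin (α + β))) := by
  have hsin : ∀ i, sin (2 * a i) = 0 := fun i => by
    obtain ⟨m, hm⟩ := ha i
    rw [hm, show 2 * (m * (π / 2)) = m * π by ring, sin_int_mul_pi]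
  have hsum : ∑ i, cos (2 * a i) = 0 := by
    have hexp : ∀ j, 2 * Complex.I * (a j : ℂ) = ((2 * a j : ℝ) : ℂ) * Complex.I := fun j => by
      push_cast
      ring
    simpa only [hexp, Complex.re_sum, Complex.exp_ofReal_mul_I_re, Complex.zero_re] using
      congrArg Complex.re hsplay
  have h := charpoly_linJ_mul_pow_mul_sq (by omega) α β ε hsin hsum
  have hs : X + C ε ≠ 0 := X_add_C_ne_zero ε
  have hp : X * (X + C (ε + 1 / 2 * sin (α - β))) ≠ 0 := mul_ne_zero X_ne_zero (X_add_C_ne_zero _)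
  refine mul_right_cancel₀ (mul_ne_zero (pow_ne_zero N hs) (pow_ne_zero 2 hp)) (h.trans ?_)
  obtain ⟨m, rfl⟩ : ∃ m, N = m + 2 := ⟨N - 2, by omega⟩
  simp only [mul_pow, Nat.add_sub_cancel, show m + 2 - 1 = m + 1 by omega]
  ring

/-- The characteristic polynomial of the linearization at a `4`-phase cluster of splay
type (all phases in `{0, π/2, π, 3π/2}` modulo `2π`, with vanishing second moment order
parameter). -/
theorem charpoly_four_phase_cluster
    (N : ℕ) (hN : 2 ≤ N) (α β ε : ℝ) (hε : 0 < ε) (a : Fin N → ℝ)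
    (ha : ∀ i, ∃ m : ℤ, a i = m * (Real.pi / 2))
    (hsplay : ∑ j, Complex.exp (2 * Complex.I * (a j : ℂ)) = 0) :
    (linJ N α β ε a).charpoly =
      X ^ (N - 1) * (X + C ε) ^ (N * (N - 1) + 1) *
        (X + C (ε + (1 / 2) * Real.sin (α - β))) ^ (N - 2) *
        (X ^ 2 + C (ε + Real.sin α * Real.cos β) * X + C (ε * Real.sin (α + β))) :=
  charpoly_four_phase_cluster_general N hN α β ε a ha hsplay
end

section
/- Let ε > 0, α, β, ψ ∈ ℝ and q1, q2 > 0 with q1 + q2 = 1, and suppose q1 sin(2ψ + α + β) + q2 sin(−2ψ + α + β) = −sin(α+β). Define the three quadratic polynomials P1(X) = X² + (1/2)(sin(α−β) − q1 sin(α+β) − q2 sin(−2ψ+α+β) + 2ε) X − ε q1 sin(α+β) − ε q2 sin(−2ψ+α+β), P2(X) = X² + (1/2)(sin(α−β) − q1 sin(2ψ+α+β) − q2 sin(α+β) + 2ε) X − ε q1 sin(2ψ+α+β) − ε q2 sin(α+β), and P3(X) = X² + (1/2)(sin(α−β) − q1 sin(2ψ+α+β) − q2 sin(−2ψ+α+β)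 + 2ε) X − ε q1 sin(2ψ+α+β) − ε q2 sin(−2ψ+α+β). Then at least one of P1, P2, P3 has a complex root with nonnegative real part. (Consequently, double antipodal one-cluster states are unstable for all parameter values α, β.) -/
open Real

/-- A monic quadratic `X^2 + b X - c` with `c ≥ 0` has a nonnegative real root. -/
lemma quad_nonneg_root (b c : ℝ) (hc : 0 ≤ c) :
    ∃ r : ℝ, 0 ≤ r ∧ r ^ 2 + b * r - c = 0 := by
  have hD : 0 ≤ b ^ 2 + 4 * c := by positivity
  set s := Real.sqrt (b ^ 2 + 4 * c) with hs
  have hs2 : s ^ 2 = b ^ 2 + 4 * c := Real.sq_sqrt hD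
  refine ⟨(s - b) / 2, ?_, ?_⟩
  · have : |b| ≤ s := by
      rw [hs]
      have : |b| = Real.sqrt (b ^ 2) := by
        rw [Real.sqrt_sq_eq_abs]
      rw [this]
      exact Real.sqrt_le_sqrt (by linarith)
    have := abs_le.mp (le_refl |b|)
    nlinarith [neg_abs_le b]
  · nlinarith

/-- Instability of double antipodal one-cluster states: under the existence condition,
at least one of the three Lyapunov quadratics `P1, P2, P3` has a root with nonnegative
real part. -/
theorem double_antipodal_unstable
    (ε α β ψ q1 q2 : ℝ) (hε : 0 < ε)
    (hq1 : 0 < q1) (hq2 : 0 < q2) (hq : q1 + q2 = 1)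
    (hex : q1 * Real.sin (2 * ψ + α + β) + q2 * Real.sin (-2 * ψ + α + β)
        = -Real.sin (α + β)) :
    ∃ z : ℂ, 0 ≤ z.re ∧
      (z ^ 2
          + (↑((1 / 2) * (Real.sin (α - β) - q1 * Real.sin (α + β)
              - q2 * Real.sin (-2 * ψ + α + β) + 2 * ε)) : ℂ) * z
          - (↑(ε * q1 * Real.sin (α + β) + ε * q2 * Real.sin (-2 * ψ + α + β)) : ℂ) = 0 ∨
       z ^ 2
          + (↑((1 / 2) * (Real.sin (α - β) - q1 * Real.sin (2 * ψ + α + β)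
              - q2 * Real.sin (α + β) + 2 * ε)) : ℂ) * z
          - (↑(ε * q1 * Real.sin (2 * ψ + α + β) + ε * q2 * Real.sin (α + β)) : ℂ) = 0 ∨
       z ^ 2
          + (↑((1 / 2) * (Real.sin (α - β) - q1 * Real.sin (2 * ψ + α + β)
              - q2 * Real.sin (-2 * ψ + α + β) + 2 * ε)) : ℂ) * z
          - (↑(ε * q1 * Real.sin (2 * ψ + α + β)
              + ε * q2 * Real.sin (-2 * ψ + α + β)) : ℂ) = 0) := by
  set A := Real.sin (α + β)
  set B := Real.sin (2 * ψ + α + β)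
  set C := Real.sin (-2 * ψ + α + β)
  -- s1 + s2 = 0 from the existence condition
  have hsum : (q1 * A + q2 * C) + (q1 * B + q2 * A) = 0 := by
    have : (q1 + q2) * A = A := by rw [hq, one_mul]
    nlinarith [hex]
  rcases le_or_gt 0 (q1 * A + q2 * C) with h1 | h1
  · -- P1 works
    obtain ⟨r, hr0, hr⟩ := quad_nonneg_root
      ((1 / 2) * (Real.sin (α - β) - q1 * A - q2 * C + 2 * ε))
      (ε * q1 * A + ε * q2 * C) (by nlinarith)
    refine ⟨(r : ℂ), by simpa using hr0, Or.inl ?_⟩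
    exact_mod_cast congrArg (Complex.ofReal) hr
  · -- P2 works
    obtain ⟨r, hr0, hr⟩ := quad_nonneg_root
      ((1 / 2) * (Real.sin (α - β) - q1 * B - q2 * A + 2 * ε))
      (ε * q1 * B + ε * q2 * A) (by nlinarith)
    refine ⟨(r : ℂ), by simpa using hr0, Or.inr (Or.inl ?_)⟩
    exact_mod_cast congrArg (Complex.ofReal) hr
end

section
/- Let N ≥ 1 and s, ε, λ ∈ ℝ. Let A be the N × N real matrix with diagonal entries A_{ii} = −((N−1)/(2N)) s and off-diagonal entries A_{ij} = s/(2N) for i ≠ j. Then det((ε + λ) · (A − λ I_N) − ε · A) = (−1)^N λ^N (λ + ε)(λ + ε + s/2)^{N−1}. -/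
open Real Matrix

/-!
The matrix collapses to `λ (A - (λ + ε) I)`, and `A = (s / 2N) J - (s / 2) I` with `J` the
all-ones matrix. Hence it is a scalar plus a constant matrix, whose determinant follows from the
matrix determinant lemma: `det (a I + b J) = a ^ (N - 1) (a + N b)`, the eigenvalue `N` of `J`
giving the factor `λ + ε` and its `(N - 1)`-fold eigenvalue `0` giving `λ + ε + s / 2`.
-/

namespace Matrix

variable {K n : Type*} [Field K] [Fintype n] [DecidableEq n] [Nonempty n]

theorem det_smul_one_add_of_const (a b : K) :
    (a • (1 : Matrix n n K) + of fun _ _ => b).det =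
      a ^ (Fintype.card n - 1) * (a + Fintype.card n * b) := by
  rcases eq_or_ne a 0 with rfl | ha
  · rcases subsingleton_or_nontrivial n with hn | hn
    · have : Unique n := uniqueOfSubsingleton (Classical.arbitrary n)
      simp [det_unique]
    · obtain ⟨i, j, hij⟩ := exists_pair_ne n
      have hcard : Fintype.card n - 1 ≠ 0 := by have := Fintype.one_lt_card (α := n); omega
      rw [det_zero_of_row_eq hij (by ext; simp), zero_pow hcard, zero_mul]
  · have hM : a • (1 : Matrix n n K) + of (fun _ _ => b) = a • ((1 : Matrix n n K) +
        replicateCol Unit (fun _ : n => b / a) * replicateRow Unit (fun _ : n => (1 : K))) := by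
      ext i j
      simp [mul_apply, mul_add, mul_div_cancel₀ b ha]
    have hdot : (fun _ : n => (1 : K)) ⬝ᵥ (fun _ => b / a) = Fintype.card n * (b / a) := by
      simp [dotProduct]
    rw [hM, det_smul, det_one_add_replicateCol_mul_replicateRow, hdot,
      ← Nat.sub_one_add_one_eq_of_pos Fintype.card_pos, pow_succ, Nat.add_sub_cancel]
    field_simp

end Matrix

/-- Determinant identity arising in the stability analysis of splay-type one-cluster
states: for the reduced circulant matrix `A` (diagonal `−((N−1)/(2N)) s`, off-diagonal
`s/(2N)`) one has `det((ε + λ)(A − λ I) − ε A) = (−1)^N λ^N (λ+ε)(λ+ε+s/2)^{N−1}`. -/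
theorem splay_reduced_determinant
    (N : ℕ) (hN : 1 ≤ N) (s ε lam : ℝ)
    (A : Matrix (Fin N) (Fin N) ℝ)
    (hA : ∀ i j, A i j =
      if i = j then -(((N : ℝ) - 1) / (2 * (N : ℝ))) * s else s / (2 * (N : ℝ))) :
    ((ε + lam) • (A - lam • (1 : Matrix (Fin N) (Fin N) ℝ)) - ε • A).det
      = (-1) ^ N * lam ^ N * (lam + ε) * (lam + ε + s / 2) ^ (N - 1) := by
  have hN0 : (N : ℝ) ≠ 0 := by positivity
  have hA' : A = (-(s / 2)) • 1 + of fun _ _ => s / (2 * N) := by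
    ext i j
    rw [hA]
    by_cases hij : i = j
    · simp only [hij, ↓reduceIte, neg_mul, neg_smul, Matrix.add_apply, Matrix.neg_apply, Matrix.smul_apply,
        one_apply_eq, smul_eq_mul, mul_one, of_apply]
      field_simp
      ring
    · simp [hij]
  have hM : (ε + lam) • (A - lam • (1 : Matrix (Fin N) (Fin N) ℝ)) - ε • A =
      lam • ((-(lam + ε + s / 2)) • 1 + of fun _ _ => s / (2 * N)) := by
    rw [hA']
    module
  have : Nonempty (Fin N) := ⟨⟨0, hN⟩⟩
  rw [hM, det_smul, det_smul_one_add_of_const, Fintype.card_fin]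
  obtain ⟨k, rfl⟩ : ∃ k, N = k + 1 := ⟨N - 1, by omega⟩
  rw [Nat.add_sub_cancel, neg_pow]
  push_cast at hN0 ⊢
  field_simp
  ring
end
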